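/- arXiv:2407.19431 — 10 statements merged into one kernel-verified Lean document; each statement's English description precedes it below -/
import Mathlib

section
/- A vector a : V → ℕ is a partial score vector of a multigraph G = (V, E, ends) if and only if for every subset S ⊆ V one has ∑_{v∈S} a_v ≤ κ_S. -/
open Finset

/-- The degree `κ_S` of a subset `S` of vertices of a multigraph `(V, E, ends)`:
the number of edges having at least one endpoint in `S` (each loop counted once). -/
def multigraphKappa {V E : Type*} [Fintype E] [DecidableEq V]
    (ends : E → Sym2 V) (S : Finset V) : ℕ :=
  (Finset.univ.filter fun e => ∃ v ∈ S, v ∈ ends e).card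

/-- A partial orientation of a multigraph: each edge is either unoriented (`none`)
or oriented with source one of its endpoints. -/
def IsPartialOrientation {V E : Type*} (ends : E → Sym2 V) (o : E → Option V) : Prop :=
  ∀ e v, o e = some v → v ∈ ends e

/-- The score vector of a partial orientation: `a v` is the number of edges
oriented with source `v`. -/
def scoreVector {V E : Type*} [Fintype E] [DecidableEq V]
    (o : E → Option V) (v : V) : ℕ :=
  (Finset.univ.filter fun e => o e = some v).card

/-- A vector `a : V → ℕ` is a partial score vector of the multigraph `(V, E, ends)`
if and only if `∑_{v ∈ S} a v ≤ κ_S` for every subset `S ⊆ V`. -/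
theorem isPartialScoreVector_iff {V E : Type*} [Fintype V] [Fintype E] [DecidableEq V]
    (ends : E → Sym2 V) (a : V → ℕ) :
    (∃ o : E → Option V, IsPartialOrientation ends o ∧ scoreVector o = a) ↔
      ∀ S : Finset V, ∑ v ∈ S, a v ≤ multigraphKappa ends S := by
  classical
  constructor
  · rintro ⟨o, ho, rfl⟩ S
    have hdisj : ∀ v ∈ S, ∀ w ∈ S, v ≠ w →
        Disjoint (Finset.univ.filter fun e => o e = some v)
          (Finset.univ.filter fun e => o e = some w) := by
      intro v _ w _ hvw
      simp only [Finset.disjoint_left, Finset.mem_filter]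
      rintro e ⟨-, h1⟩ ⟨-, h2⟩
      exact hvw (Option.some_injective _ (h1.symm.trans h2))
    have hsum : ∑ v ∈ S, scoreVector o v
        = (S.biUnion fun v => Finset.univ.filter fun e => o e = some v).card := by
      rw [Finset.card_biUnion hdisj]; rfl
    rw [hsum]
    apply Finset.card_le_card
    intro e he
    simp only [Finset.mem_biUnion, Finset.mem_filter] at he ⊢
    obtain ⟨v, hv, -, hoe⟩ := he
    exact ⟨Finset.mem_univ e, v, hv, ho e v hoe⟩
  · intro h
    set ι := (v : V) × Fin (a v) with hι
    set t : ι → Finset E := fun x => Finset.univ.filter fun e => x.1 ∈ ends e with ht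
    have hall : ∀ s : Finset ι, s.card ≤ (s.biUnion t).card := by
      intro s
      set S := s.image Sigma.fst with hS
      have h1 : s.card ≤ ∑ v ∈ S, a v := by
        calc s.card ≤ (S.sigma fun v => (Finset.univ : Finset (Fin (a v)))).card := by
              apply Finset.card_le_card
              intro x hx
              exact Finset.mem_sigma.mpr ⟨Finset.mem_image_of_mem _ hx, Finset.mem_univ _⟩
          _ = ∑ v ∈ S, a v := by
              rw [Finset.card_sigma]
              exact Finset.sum_congr rfl fun v _ => by simp
      have hset : (Finset.univ.filter fun e => ∃ v ∈ S, v ∈ ends e) = s.biUnion t := by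
        ext e
        simp only [Finset.mem_filter, Finset.mem_univ, true_and,
          Finset.mem_biUnion, ht, hS, Finset.mem_image]
        constructor
        · rintro ⟨v, ⟨x, hx, rfl⟩, hv⟩; exact ⟨x, hx, hv⟩
        · rintro ⟨x, hx, hmem⟩
          exact ⟨x.1, ⟨x, hx, rfl⟩, hmem⟩
      have h2 : multigraphKappa ends S = (s.biUnion t).card := by
        unfold multigraphKappa; rw [hset]
      exact h1.trans ((h S).trans_eq h2)
    obtain ⟨f, hf, hft⟩ := (Finset.all_card_le_biUnion_card_iff_exists_injective t).mp hall
    refine ⟨fun e => if h : ∃ x : ι, f x = e then some (Classical.choose h).1 else none, ?_, ?_⟩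
    · intro e v hev
      dsimp only at hev
      split_ifs at hev with hex
      · have h1 := Classical.choose_spec hex
        have h2 := hft (Classical.choose hex)
        have h3 : (Classical.choose hex).1 ∈ ends (f (Classical.choose hex)) :=
          (Finset.mem_filter.mp h2).2
        rw [h1] at h3
        rw [← Option.some_injective _ hev]
        exact h3
    · funext v
      have key : ∀ e, (if h : ∃ x : ι, f x = e then some (Classical.choose h).1 else none)
          = some v ↔ ∃ i : Fin (a v), f ⟨v, i⟩ = e := by
        intro e
        constructor
        · intro he
          split_ifs at he with hex
          · have hx : ∃ x : ι, f x = e ∧ x.1 = v :=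
              ⟨Classical.choose hex, Classical.choose_spec hex, Option.some_injective _ he⟩
            obtain ⟨⟨w, i⟩, hfe, rfl⟩ := hx
            exact ⟨i, hfe⟩
        · rintro ⟨i, hi⟩
          have hex : ∃ x : ι, f x = e := ⟨⟨v, i⟩, hi⟩
          rw [dif_pos hex]
          have hxe : Classical.choose hex = ⟨v, i⟩ :=
            hf ((Classical.choose_spec hex).trans hi.symm)
          rw [hxe]
      have hfilt : (Finset.univ.filter fun e =>
          (if h : ∃ x : ι, f x = e then some (Classical.choose h).1 else none) = some v)
          = Finset.univ.image fun i : Fin (a v) => f ⟨v, i⟩ := by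
        ext e
        simp only [Finset.mem_filter, Finset.mem_univ, true_and, Finset.mem_image, key]
      have hinj : Function.Injective fun i : Fin (a v) => f ⟨v, i⟩ := by
        intro i j hij
        have hh := hf hij
        rw [Sigma.mk.inj_iff] at hh
        exact eq_of_heq hh.2
      rw [scoreVector, hfilt, Finset.card_image_of_injective _ hinj]
      simp
end

section
/- Let G = (V, E, ends) be a multigraph and let = {(e, v) : e ∈ E, v an endpoint of e} be its set of arrows. Let Ê_G be the quotient of the polynomial algebra MvPolynomial ℚ by the ideal generated by all products X_a · X_b where a = (e, u) and b = (e, w) are arrows with the same underlying edge e (allowing a = b, which gives the squares X_a²). For v ∈ V let y_v ∈ Ê_G be the image of ∑_{(e,u) ∈ Â with u = v} X_{(e,u)}, and let f_G : MvPolynomial V ℚ → Ê_G be the ℚ-algebra homomorphism sending the variable z_v to y_v. Then the kernel of f_G equals the ideal of MvPolynomial V ℚ generated by all monomials ∏_{v∈S} z_v^{a_v}, where S ranges over nonempty subsets of V and (a_v)_{v∈S} ranges over families of nonnegative integers with ∑_{v∈S} a_v = κ_S + 1. -/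
open Finset MvPolynomial

/-- The set `Â` of arrows. -/
def Arrows {V E : Type*} (ends : E → Sym2 V) : Type _ :=
  {p : E × V // p.2 ∈ ends p.1}

noncomputable def arrowIdeal {V E : Type*} (ends : E → Sym2 V) :
    Ideal (MvPolynomial (Arrows ends) ℚ) :=
  Ideal.span {q | ∃ a b : Arrows ends, a.1.1 = b.1.1 ∧ q = X a * X b}

instance {V E : Type*} [Fintype V] [Fintype E] [DecidableEq V] (ends : E → Sym2 V) :
    Fintype (Arrows ends) :=
  Subtype.fintype _

/-- The partial orientation algebra `Ê_G`. -/
def hatE {V E : Type*} (ends : E → Sym2 V) : Type _ :=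
  MvPolynomial (Arrows ends) ℚ ⧸ arrowIdeal ends

noncomputable instance {V E : Type*} (ends : E → Sym2 V) : CommRing (hatE ends) :=
  Ideal.Quotient.commRing _

noncomputable instance {V E : Type*} (ends : E → Sym2 V) :
    Algebra ℚ (hatE ends) :=
  Ideal.Quotient.algebra _

/-- The generator `y_v ∈ Ê_G`. -/
noncomputable def yGen {V E : Type*} [Fintype V] [Fintype E] [DecidableEq V]
    (ends : E → Sym2 V) (v : V) : hatE ends :=
  Ideal.Quotient.mk (arrowIdeal ends)
    (∑ a : Arrows ends, if a.1.2 = v then X a else 0)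

/-- The homomorphism `f_G`. -/
noncomputable def fG {V E : Type*} [Fintype V] [Fintype E] [DecidableEq V]
    (ends : E → Sym2 V) : MvPolynomial V ℚ →ₐ[ℚ] hatE ends :=
  MvPolynomial.aeval (yGen ends)

/-!
Give an arrow the weight of its head. Then `z_v ↦ ∑_{head a = v} X_a` is graded by `V →₀ ℕ`,
and `arrowIdeal` is the monomial ideal whose standard monomials are the partial orientations
(no edge carries two arrows). If `∑_{v ∈ S} α_v > κ_S` for some `S`, every monomial of the image
of `z^α` uses only arrows on the `κ_S` edges at `S` but has degree `> κ_S`, so by pigeonhole it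
repeats an edge. If instead `∑_{v ∈ S} α_v ≤ κ_S` for all `S`, Hall's theorem gives distinct
edges to the `α_v` copies of each vertex `v`; orienting each of them towards its vertex yields a
partial orientation of weight `α` that occurs in the image of `z^α` with positive coefficient.
Since the grading separates the images of distinct monomials, this orientation reads off the
coefficient of `z^α` in any element of the kernel, which must therefore vanish.
-/

namespace Finsupp

variable {σ τ : Type*}

theorem weight_single_one_comp (f : σ → τ) (d : σ →₀ ℕ) :
    weight (fun i => single (f i) 1) d = d.mapDomain f := by
  simp [weight_apply, mapDomain, smul_single]

theorem le_mapDomain_apply {M : Type*} [AddCommMonoid M] [PartialOrder M]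
    [CanonicallyOrderedAdd M] [IsOrderedAddMonoid M] (f : σ → τ) (d : σ →₀ M) (x : σ) :
    d x ≤ d.mapDomain f (f x) := by
  classical
  by_cases hx : x ∈ d.support
  · rw [mapDomain, sum_apply, sum]
    calc d x = single (f x) (d x) (f x) := by rw [single_eq_same]
      _ ≤ ∑ y ∈ d.support, single (f y) (d y) (f x) :=
        Finset.single_le_sum (f := fun y => single (f y) (d y) (f x)) (fun _ _ => zero_le) hx
  · simp [notMem_support_iff.mp hx]

theorem exists_single_add_single_le_of_one_lt_sum {d : σ →₀ ℕ} {s : Finset σ}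
    (h : 1 < ∑ x ∈ s, d x) : ∃ a ∈ s, ∃ b ∈ s, single a 1 + single b 1 ≤ d := by
  classical
  obtain ⟨a, ha, hda⟩ := Finset.exists_ne_zero_of_sum_ne_zero (s := s) (f := d) (by omega)
  have hle : single a 1 ≤ d := by simpa [single_le_iff] using Nat.one_le_iff_ne_zero.mpr hda
  have hrest : ∑ x ∈ s, (d - single a 1 : σ →₀ ℕ) x ≠ 0 := by
    simp only [tsub_apply]
    rw [Finset.sum_tsub_distrib _ fun x _ => hle x]
    simp only [single_apply, Finset.sum_ite_eq, if_pos ha]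
    omega
  obtain ⟨b, hb, hdb⟩ := Finset.exists_ne_zero_of_sum_ne_zero hrest
  refine ⟨a, ha, b, hb, ?_⟩
  rw [add_comm, ← le_tsub_iff_right hle]
  simpa [single_le_iff] using Nat.one_le_iff_ne_zero.mpr hdb

theorem sum_single_apply_eq_ite {M : Type*} [AddCommMonoid M] [DecidableEq σ] (s : Finset σ)
    (a : σ → M) (u : σ) :
    (∑ v ∈ s, single v (a v)) u = if u ∈ s then a u else 0 := by
  simp [finsetSum_apply, single_apply]

end Finsupp

theorem Finset.exists_le_sum_eq {ι : Type*} {s : Finset ι} {f : ι → ℕ} {n : ℕ}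
    (h : n ≤ ∑ i ∈ s, f i) : ∃ g : ι → ℕ, (∀ i ∈ s, g i ≤ f i) ∧ ∑ i ∈ s, g i = n := by
  classical
  induction n with
  | zero => exact ⟨0, fun _ _ => Nat.zero_le _, by simp⟩
  | succ n ih =>
    obtain ⟨g, hgf, hg⟩ := ih (by omega)
    obtain ⟨i, hi, hlt⟩ := Finset.exists_lt_of_sum_lt (hg ▸ h : ∑ i ∈ s, g i < ∑ i ∈ s, f i)
    refine ⟨g + Pi.single i 1, fun j hj => ?_, ?_⟩
    · rcases eq_or_ne j i with rfl | hji
      · simpa using hlt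
      · simpa [hji] using hgf j hj
    · simp only [Pi.add_apply, Finset.sum_add_distrib, hg, Finset.sum_pi_single', if_pos hi]

namespace MvPolynomial

theorem prod_X_pow_eq_monomial_sum_single {R σ : Type*} [CommSemiring R]
    (s : Finset σ) (a : σ → ℕ) :
    ∏ v ∈ s, (X v : MvPolynomial σ R) ^ a v = monomial (∑ v ∈ s, Finsupp.single v (a v)) 1 := by
  simp [monomial_sum_one, X_pow_eq_monomial]

section OrderedCoefficients

variable {R σ : Type*} [CommSemiring R] [PartialOrder R] [IsOrderedRing R]

theorem coeff_mul_nonneg {p q : MvPolynomial σ R} (hp : ∀ d, 0 ≤ coeff d p)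
    (hq : ∀ d, 0 ≤ coeff d q) (d : σ →₀ ℕ) : 0 ≤ coeff d (p * q) := by
  classical
  rw [coeff_mul]
  exact Finset.sum_nonneg fun x _ => mul_nonneg (hp _) (hq _)

theorem coeff_mul_le_coeff_add_mul {p q : MvPolynomial σ R} (hp : ∀ d, 0 ≤ coeff d p)
    (hq : ∀ d, 0 ≤ coeff d q) (d₁ d₂ : σ →₀ ℕ) :
    coeff d₁ p * coeff d₂ q ≤ coeff (d₁ + d₂) (p * q) := by
  classical
  rw [coeff_mul]
  exact Finset.single_le_sum (s := antidiagonal (d₁ + d₂))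
    (f := fun x => coeff x.1 p * coeff x.2 q) (fun x _ => mul_nonneg (hp _) (hq _))
    (a := (d₁, d₂)) (mem_antidiagonal.mpr rfl)

theorem coeff_prod_nonneg {ι : Type*} (s : Finset ι) {p : ι → MvPolynomial σ R}
    (hp : ∀ i d, 0 ≤ coeff d (p i)) (d : σ →₀ ℕ) : 0 ≤ coeff d (∏ i ∈ s, p i) := by
  classical
  induction s using Finset.induction_on generalizing d with
  | empty => rw [prod_empty, coeff_one]; split_ifs <;> simp
  | insert i s hi ih => rw [prod_insert hi]; exact coeff_mul_nonneg (hp i) ih d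

theorem prod_coeff_le_coeff_sum_prod {ι : Type*} (s : Finset ι) {p : ι → MvPolynomial σ R}
    (hp : ∀ i d, 0 ≤ coeff d (p i)) (d : ι → σ →₀ ℕ) :
    ∏ i ∈ s, coeff (d i) (p i) ≤ coeff (∑ i ∈ s, d i) (∏ i ∈ s, p i) := by
  classical
  induction s using Finset.induction_on with
  | empty => simp
  | insert i s hi ih =>
    rw [prod_insert hi, prod_insert hi, sum_insert hi]
    calc coeff (d i) (p i) * ∏ j ∈ s, coeff (d j) (p j)
        ≤ coeff (d i) (p i) * coeff (∑ j ∈ s, d j) (∏ j ∈ s, p j) :=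
          mul_le_mul_of_nonneg_left ih (hp i _)
      _ ≤ _ := coeff_mul_le_coeff_add_mul (hp i) (coeff_prod_nonneg s hp) _ _

end OrderedCoefficients

end MvPolynomial

namespace Arrows

variable {V E : Type*} {ends : E → Sym2 V}

abbrev edge (a : Arrows ends) : E := a.1.1

abbrev head (a : Arrows ends) : V := a.1.2

abbrev mk (e : E) (v : V) (h : v ∈ ends e) : Arrows ends := ⟨(e, v), h⟩

@[simp]
theorem head_mk (e : E) (v : V) (h : v ∈ ends e) : (mk e v h).head = v := rfl


end Arrows

section

variable {V E : Type*} (ends : E → Sym2 V)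

theorem mem_arrowIdeal_iff {q : MvPolynomial (Arrows ends) ℚ} :
    q ∈ arrowIdeal ends ↔ ∀ d ∈ q.support,
      ∃ a b : Arrows ends, a.edge = b.edge ∧ Finsupp.single a 1 + Finsupp.single b 1 ≤ d := by
  have hgen : arrowIdeal ends = Ideal.span ((fun d => monomial d 1) '' {d |
      ∃ a b : Arrows ends, a.edge = b.edge ∧ d = Finsupp.single a 1 + Finsupp.single b 1}) := by
    refine congrArg Ideal.span (Set.ext fun q => ?_)
    simp [X, monomial_mul, eq_comm]
  rw [hgen, mem_ideal_span_monomial_image]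
  simp

end

section

variable {V E : Type*} [Fintype E] [DecidableEq V] (ends : E → Sym2 V)

def kerGenerators : Set (MvPolynomial V ℚ) :=
  {m | ∃ (S : Finset V) (a : V → ℕ), S.Nonempty ∧
    (∑ v ∈ S, a v = multigraphKappa ends S + 1) ∧ m = ∏ v ∈ S, X v ^ a v}

theorem monomial_mem_span_kerGenerators {S : Finset V} (hS : S.Nonempty) {α : V →₀ ℕ}
    (hα : multigraphKappa ends S + 1 ≤ ∑ v ∈ S, α v) (c : ℚ) :
    monomial α c ∈ Ideal.span (kerGenerators ends) := by
  obtain ⟨a, haα, hsum⟩ := Finset.exists_le_sum_eq hα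
  have hle : ∑ v ∈ S, Finsupp.single v (a v) ≤ α := fun u => by
    rw [Finsupp.sum_single_apply_eq_ite]
    split_ifs with hu
    exacts [haα u hu, Nat.zero_le _]
  rw [← tsub_add_cancel_of_le hle, ← mul_one c, ← monomial_mul,
    ← prod_X_pow_eq_monomial_sum_single]
  exact Ideal.mul_mem_left _ _ (Ideal.subset_span ⟨S, a, hS, hsum, rfl⟩)

theorem exists_injective_edge_choice {α : V →₀ ℕ}
    (hall : ∀ S : Finset V, S.Nonempty → ∑ v ∈ S, α v ≤ multigraphKappa ends S) :
    ∃ f : (Σ v, Fin (α v)) → E, Function.Injective f ∧ ∀ x, x.1 ∈ ends (f x) := by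
  classical
  set t : (Σ v, Fin (α v)) → Finset E := fun x => univ.filter fun e => x.1 ∈ ends e
  suffices hcard : ∀ s : Finset (Σ v, Fin (α v)), #s ≤ #(s.biUnion t) by
    obtain ⟨f, hinj, hft⟩ := (all_card_le_biUnion_card_iff_exists_injective t).mp hcard
    exact ⟨f, hinj, fun x => (mem_filter.mp (hft x)).2⟩
  intro s
  rcases s.eq_empty_or_nonempty with rfl | hs
  · simp
  have hbiUnion : s.biUnion t = univ.filter fun e => ∃ v ∈ s.image Sigma.fst, v ∈ ends e := by
    ext e
    simp [t]
  calc #s ≤ #((s.image Sigma.fst).sigma fun v => (univ : Finset (Fin (α v)))) :=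
        card_le_card fun x hx => mem_sigma.mpr ⟨mem_image_of_mem _ hx, mem_univ _⟩
    _ = ∑ v ∈ s.image Sigma.fst, α v := by simp
    _ ≤ multigraphKappa ends (s.image Sigma.fst) := hall _ (hs.image _)
    _ = #(s.biUnion t) := by rw [hbiUnion]; rfl

end

section

variable {V E : Type*} [Fintype V] (ends : E → Sym2 V)

noncomputable def orientationMonomial {α : V →₀ ℕ} {f : (Σ v, Fin (α v)) → E}
    (hf : ∀ x, x.1 ∈ ends (f x)) : Arrows ends →₀ ℕ :=
  ∑ x, Finsupp.single (Arrows.mk (f x) x.1 (hf x)) 1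

variable {ends} {α : V →₀ ℕ} {f : (Σ v, Fin (α v)) → E} (hf : ∀ x, x.1 ∈ ends (f x))

theorem mapDomain_head_orientationMonomial :
    (orientationMonomial ends hf).mapDomain Arrows.head = α := by
  simp [orientationMonomial, Finsupp.mapDomain_finsetSum, Fintype.sum_sigma]

theorem mapDomain_edge_orientationMonomial_le_one (hinj : Function.Injective f) (e : E) :
    (orientationMonomial ends hf).mapDomain Arrows.edge e ≤ 1 := by
  classical
  rw [orientationMonomial, Finsupp.mapDomain_finsetSum]
  simp only [Finsupp.mapDomain_single, Finsupp.finsetSum_apply, Finsupp.single_apply]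
  rw [sum_boole]
  exact card_le_one.mpr fun x hx y hy => hinj ((mem_filter.mp hx).2.trans (mem_filter.mp hy).2.symm)

theorem not_single_add_single_le_orientationMonomial (hinj : Function.Injective f)
    {a b : Arrows ends} (hab : a.edge = b.edge) :
    ¬ Finsupp.single a 1 + Finsupp.single b 1 ≤ orientationMonomial ends hf := fun hle => by
  have h2 := Finsupp.mapDomain_mono (f := Arrows.edge) hle a.edge
  simp only [Finsupp.mapDomain_add, Finsupp.mapDomain_single, hab, Finsupp.add_apply,
    Finsupp.single_eq_same] at h2
  have := mapDomain_edge_orientationMonomial_le_one hf hinj b.edge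
  omega

end

section

variable {V E : Type*} [Fintype V] [Fintype E] [DecidableEq V] (ends : E → Sym2 V)

noncomputable def yPoly (v : V) : MvPolynomial (Arrows ends) ℚ :=
  ∑ a : Arrows ends, if a.head = v then X a else 0

theorem mem_ker_fG_iff {p : MvPolynomial V ℚ} :
    p ∈ RingHom.ker (fG ends).toRingHom ↔ aeval (yPoly ends) p ∈ arrowIdeal ends := by
  have : fG ends = (Ideal.Quotient.mkₐ ℚ (arrowIdeal ends)).comp (aeval (yPoly ends)) := by
    rw [comp_aeval]; rfl
  rw [RingHom.mem_ker, ← Ideal.Quotient.eq_zero_iff_mem]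
  exact Eq.congr_left (congrArg (· p) this)

theorem coeff_yPoly_nonneg (v : V) (d : Arrows ends →₀ ℕ) : 0 ≤ coeff d (yPoly ends v) := by
  classical
  rw [yPoly, coeff_sum]
  refine sum_nonneg fun a _ => ?_
  split_ifs
  · rw [coeff_X]; split_ifs <;> norm_num
  · rw [coeff_zero]

theorem coeff_single_yPoly_head (a : Arrows ends) :
    coeff (Finsupp.single a 1) (yPoly ends a.head) = 1 := by
  classical
  rw [yPoly, coeff_sum, sum_eq_single a]
  · simp
  · intro b _ hb
    split_ifs
    · rw [coeff_X, if_neg fun h => hb (Finsupp.single_left_injective one_ne_zero h)]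
    · rw [coeff_zero]
  · simp

noncomputable abbrev headWeight (a : Arrows ends) : V →₀ ℕ := Finsupp.single a.head 1

theorem isWeightedHomogeneous_yPoly (v : V) :
    IsWeightedHomogeneous (headWeight ends) (yPoly ends v) (Finsupp.single v 1) := by
  refine IsWeightedHomogeneous.sum _ _ _ fun a _ => ?_
  split_ifs with h
  · exact h ▸ isWeightedHomogeneous_X ℚ _ a
  · exact isWeightedHomogeneous_zero ℚ _ _

theorem isWeightedHomogeneous_aeval_yPoly_monomial (β : V →₀ ℕ) (c : ℚ) :
    IsWeightedHomogeneous (headWeight ends) (aeval (yPoly ends) (monomial β c)) β := by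
  rw [aeval_monomial, algebraMap_eq]
  refine IsWeightedHomogeneous.C_mul ?_ c
  conv_rhs => rw [← β.sum_single]
  exact IsWeightedHomogeneous.prod _ _ _ fun v _ => by
    simpa using (isWeightedHomogeneous_yPoly ends v).pow (β v)

theorem mapDomain_head_eq_of_mem_support {β : V →₀ ℕ} {c : ℚ} {d : Arrows ends →₀ ℕ}
    (hd : d ∈ (aeval (yPoly ends) (monomial β c)).support) : d.mapDomain Arrows.head = β := by
  rw [← Finsupp.weight_single_one_comp]
  exact isWeightedHomogeneous_aeval_yPoly_monomial ends β c (mem_support_iff.mp hd)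

theorem coeff_aeval_yPoly (p : MvPolynomial V ℚ) (m : Arrows ends →₀ ℕ) :
    coeff m (aeval (yPoly ends) p) = coeff (m.mapDomain Arrows.head) p *
      coeff m (aeval (yPoly ends) (monomial (m.mapDomain Arrows.head) 1)) := by
  conv_lhs => rw [p.as_sum, map_sum, coeff_sum]
  rw [sum_eq_single (m.mapDomain Arrows.head)]
  · simp only [aeval_monomial, algebraMap_eq, coeff_C_mul, map_one, one_mul]
  · intro β _ hβ
    by_contra h
    exact hβ (mapDomain_head_eq_of_mem_support ends (mem_support_iff.mpr h)).symm
  · intro h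
    rw [notMem_support_iff.mp h, monomial_zero, map_zero, coeff_zero]

theorem aeval_prod_X_pow_mem_arrowIdeal {S : Finset V} {a : V → ℕ}
    (hsum : ∑ v ∈ S, a v = multigraphKappa ends S + 1) :
    aeval (yPoly ends) (∏ v ∈ S, X v ^ a v : MvPolynomial V ℚ) ∈ arrowIdeal ends := by
  classical
  rw [prod_X_pow_eq_monomial_sum_single, mem_arrowIdeal_iff]
  intro d hd
  have hhead := mapDomain_head_eq_of_mem_support ends hd
  have hedge : ∀ x ∈ d.support, x.edge ∈ univ.filter fun e => ∃ v ∈ S, v ∈ ends e := by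
    intro x hx
    refine mem_filter.mpr ⟨mem_univ _, x.head, ?_, x.2⟩
    have hpos := (Nat.pos_of_ne_zero (Finsupp.mem_support_iff.mp hx)).trans_le
      (Finsupp.le_mapDomain_apply Arrows.head d x)
    by_contra hS
    simp [hhead, Finsupp.sum_single_apply_eq_ite, hS] at hpos
  have hdeg : ∑ x ∈ d.support, d x = multigraphKappa ends S + 1 := by
    rw [← Finsupp.degree_apply, ← Finsupp.degree_mapDomain Arrows.head d, hhead, map_sum]
    simpa using hsum
  obtain ⟨e, -, he⟩ := exists_lt_sum_fiber_of_maps_to_of_nsmul_lt_sum hedge (b := 1)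
    (by rw [hdeg, smul_eq_mul, mul_one]; exact Nat.lt_succ_self _)
  obtain ⟨a, ha, b, hb, hle⟩ := Finsupp.exists_single_add_single_le_of_one_lt_sum he
  exact ⟨a, b, (mem_filter.mp ha).2.trans (mem_filter.mp hb).2.symm, hle⟩

theorem coeff_orientationMonomial_pos {α : V →₀ ℕ} {f : (Σ v, Fin (α v)) → E}
    (hf : ∀ x, x.1 ∈ ends (f x)) :
    0 < coeff (orientationMonomial ends hf) (aeval (yPoly ends) (monomial α 1)) := by
  have hprod : aeval (yPoly ends) (monomial α 1) = ∏ x : Σ v, Fin (α v), yPoly ends x.1 := by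
    rw [aeval_monomial, map_one, one_mul, Finsupp.prod_fintype _ _ fun _ => pow_zero _,
      Fintype.prod_sigma]
    simp
  rw [hprod, orientationMonomial]
  calc (0 : ℚ) < ∏ x : Σ v, Fin (α v),
        coeff (Finsupp.single (Arrows.mk (f x) x.1 (hf x)) 1) (yPoly ends x.1) := by
        rw [prod_eq_one fun x _ => coeff_single_yPoly_head ends _]
        exact zero_lt_one
    _ ≤ _ := prod_coeff_le_coeff_sum_prod univ (p := fun x : Σ v, Fin (α v) => yPoly ends x.1)
          (fun x => coeff_yPoly_nonneg ends x.1)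
          (fun x => Finsupp.single (Arrows.mk (f x) x.1 (hf x)) 1)

theorem coeff_eq_zero_of_mem_ker_fG {p : MvPolynomial V ℚ}
    (hp : p ∈ RingHom.ker (fG ends).toRingHom) {α : V →₀ ℕ}
    (hall : ∀ S : Finset V, S.Nonempty → ∑ v ∈ S, α v ≤ multigraphKappa ends S) :
    coeff α p = 0 := by
  obtain ⟨f, hinj, hf⟩ := exists_injective_edge_choice ends hall
  have hm : coeff (orientationMonomial ends hf) (aeval (yPoly ends) p) = 0 := by
    by_contra h
    obtain ⟨a, b, hab, hle⟩ := (mem_arrowIdeal_iff ends).mp ((mem_ker_fG_iff ends).mp hp) _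
      (mem_support_iff.mpr h)
    exact not_single_add_single_le_orientationMonomial hf hinj hab hle
  rw [coeff_aeval_yPoly, mapDomain_head_orientationMonomial] at hm
  exact (mul_eq_zero.mp hm).resolve_right (coeff_orientationMonomial_pos ends hf).ne'

end

/-- The kernel of `f_G` is the ideal generated by the monomials
`∏_{v ∈ S} z_v ^ (a v)` with `S` nonempty and `∑_{v ∈ S} a v = κ_S + 1`. -/
theorem ker_fG_eq {V E : Type*} [Fintype V] [Fintype E] [DecidableEq V]
    (ends : E → Sym2 V) :
    RingHom.ker (fG ends).toRingHom =
      Ideal.span {m : MvPolynomial V ℚ |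
        ∃ (S : Finset V) (a : V → ℕ), S.Nonempty ∧
          (∑ v ∈ S, a v = multigraphKappa ends S + 1) ∧
          m = ∏ v ∈ S, X v ^ a v} := by
  show _ = Ideal.span (kerGenerators ends)
  refine le_antisymm (fun p hp => ?_) (Ideal.span_le.mpr ?_)
  · rw [← p.support_sum_monomial_coeff]
    refine Ideal.sum_mem _ fun α _ => ?_
    by_cases hall : ∀ S : Finset V, S.Nonempty → ∑ v ∈ S, α v ≤ multigraphKappa ends S
    · rw [coeff_eq_zero_of_mem_ker_fG ends hp hall, monomial_zero]
      exact Ideal.zero_mem _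
    · push Not at hall
      obtain ⟨S, hS, hlt⟩ := hall
      exact monomial_mem_span_kerGenerators ends hS hlt _
  · rintro _ ⟨S, a, -, hsum, rfl⟩
    exact (mem_ker_fG_iff ends).mpr (aeval_prod_X_pow_mem_arrowIdeal ends hsum)
end

section
/- Let G = (V, E, ends) be a multigraph and let a : V → ℕ. The point (a_v)_{v∈V} ∈ ℝ^V is an extreme point of the score vector polytope P_G if and only if there is exactly one partial orientation of G whose score vector is a. -/
open Finset

/-- The score vector polytope of a multigraph. -/
def scorePolytope {V E : Type*} [Fintype E] [DecidableEq V]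
    (ends : E → Sym2 V) : Set (V → ℝ) :=
  {x | (∀ v : V, 0 ≤ x v) ∧
    ∀ S : Finset V, ∑ v ∈ S, x v ≤ (multigraphKappa ends S : ℝ)}

/-!
If `a` is an extreme point, it lies in `P_G`, so Hall's theorem yields a partial orientation `o`
with score vector `a`. Another one `o'` would differ from `o` on some edge `e`; re-orienting `e`
in `o` as in `o'`, and in `o'` as in `o`, gives two partial orientations whose score vectors
are distinct and have midpoint `a`.

Conversely, let `o` be the only partial orientation with score vector `a`. Then every edge at a
vertex of positive score is oriented (it could take over from an edge oriented out of that
vertex), and the oriented edges contain no directed cycle (it could be reversed). So for each `v`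
with `a_v > 0`, the set `S` of vertices from which `v` can be reached along oriented edges is
tight (`∑_{u ∈ S} a_u = κ_S`), and so is `S \ {v}`. If `a` lies in an open segment between points
`x`, `y` of `P_G`, then `x` satisfies with equality every constraint that `a` does; those for `S`
and `S \ {v}`, or `x_v ≥ 0` when `a_v = 0`, force `x_v = a_v`.
-/

section ScoreVector

variable {V E : Type*} [Fintype E] [DecidableEq V]

theorem scoreVector_comp_perm (o : E → Option V) (π : Equiv.Perm E) :
    scoreVector (o ∘ π) = scoreVector o := by
  funext v
  simp only [scoreVector, card_filter, Function.comp_apply]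
  exact Equiv.sum_comp π fun e => if o e = some v then 1 else 0

theorem scoreVector_update_add [DecidableEq E] (o : E → Option V) (e : E) (t : Option V)
    (v : V) :
    scoreVector (Function.update o e t) v + (if o e = some v then 1 else 0) =
      scoreVector o v + (if t = some v then 1 else 0) := by
  simp only [scoreVector, card_filter]
  rw [← add_sum_erase _ _ (mem_univ e), ← add_sum_erase _ _ (mem_univ e),
    sum_congr rfl fun f hf => by rw [Function.update_of_ne (ne_of_mem_erase hf)],
    Function.update_self]
  ring

theorem scoreVector_eq_of_eqOn_compl {o o' : E → Option V} (F : Finset E)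
    (hout : Set.EqOn o' o (↑F)ᶜ)
    (hin : ∀ v, ∑ e ∈ F, (if o' e = some v then 1 else 0) =
      ∑ e ∈ F, (if o e = some v then 1 else 0)) :
    scoreVector o' = scoreVector o := by
  classical
  funext v
  simp only [scoreVector, card_filter]
  rw [← sum_add_sum_compl F, ← sum_add_sum_compl F, hin v]
  congr 1
  exact sum_congr rfl fun e he => by rw [hout (by simpa using he)]

theorem sum_scoreVector_eq_card (o : E → Option V) (S : Finset V) :
    ∑ v ∈ S, scoreVector o v = #{e | ∃ v ∈ S, o e = some v} := by
  classical
  simp only [scoreVector]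
  rw [← card_biUnion]
  · congr 1
    ext e
    simp
  · intro v _ w _ hvw
    simp only [Function.onFun, disjoint_filter]
    rintro e - hv hw
    exact hvw (Option.some_injective V (hv.symm.trans hw))

end ScoreVector

theorem natCast_mem_scorePolytope_iff {V E : Type*} [Fintype E] [DecidableEq V]
    {ends : E → Sym2 V} {a : V → ℕ} :
    (fun v => (a v : ℝ)) ∈ scorePolytope ends ↔
      ∀ S, ∑ v ∈ S, a v ≤ multigraphKappa ends S := by
  simp only [scorePolytope, Set.mem_ofPred_eq, Nat.cast_nonneg, implies_true, true_and]
  exact forall_congr' fun S => by rw [← Nat.cast_sum, Nat.cast_le]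

namespace IsPartialOrientation

variable {V E : Type*} [Fintype E] [DecidableEq V] {ends : E → Sym2 V} {o : E → Option V}

theorem sum_scoreVector_le (ho : IsPartialOrientation ends o) (S : Finset V) :
    ∑ v ∈ S, scoreVector o v ≤ multigraphKappa ends S := by
  rw [sum_scoreVector_eq_card, multigraphKappa]
  refine card_le_card fun e he => ?_
  simp only [mem_filter, mem_univ, true_and] at he ⊢
  obtain ⟨v, hv, hev⟩ := he
  exact ⟨v, hv, ho e v hev⟩

theorem sum_scoreVector_eq_kappa (ho : IsPartialOrientation ends o) {S : Finset V}
    (hS : ∀ e, ∀ u ∈ S, u ∈ ends e → ∃ w ∈ S, o e = some w) :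
    ∑ v ∈ S, scoreVector o v = multigraphKappa ends S := by
  rw [sum_scoreVector_eq_card, multigraphKappa]
  congr 1
  ext e
  simp only [mem_filter, mem_univ, true_and]
  constructor
  · rintro ⟨v, hv, hev⟩
    exact ⟨v, hv, ho e v hev⟩
  · rintro ⟨u, hu, hue⟩
    exact hS e u hu hue

theorem scoreVector_mem_scorePolytope (ho : IsPartialOrientation ends o) :
    (fun v => (scoreVector o v : ℝ)) ∈ scorePolytope ends :=
  natCast_mem_scorePolytope_iff.2 ho.sum_scoreVector_le

end IsPartialOrientation

theorem IsPartialOrientation.update {V E : Type*} [DecidableEq E] {ends : E → Sym2 V}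
    {o : E → Option V} (ho : IsPartialOrientation ends o) {e : E} {t : Option V}
    (ht : ∀ v, t = some v → v ∈ ends e) :
    IsPartialOrientation ends (Function.update o e t) := by
  intro f v hf
  rcases eq_or_ne f e with rfl | hfe
  · exact ht v (by simpa using hf)
  · exact ho f v (by simpa [hfe] using hf)

theorem exists_isPartialOrientation_scoreVector_eq {V E : Type*} [Fintype E] [DecidableEq V]
    (ends : E → Sym2 V) (a : V → ℕ)
    (h : ∀ S : Finset V, ∑ v ∈ S, a v ≤ multigraphKappa ends S) :
    ∃ o : E → Option V, IsPartialOrientation ends o ∧ scoreVector o = a := by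
  classical
  -- Hall's theorem for `a v` copies of each vertex `v`, each to be matched to an incident edge.
  let t : (Σ v, Fin (a v)) → Finset E := fun x => {e | x.1 ∈ ends e}
  have hall : ∀ s, #s ≤ #(s.biUnion t) := by
    intro s
    have hbiUnion :
        s.biUnion t = ({e | ∃ v ∈ s.image Sigma.fst, v ∈ ends e} : Finset E) := by
      ext e
      simp [t]
    calc #s ≤ #((s.image Sigma.fst).sigma fun v => (univ : Finset (Fin (a v)))) :=
          card_le_card fun x hx => mem_sigma.2 ⟨mem_image_of_mem _ hx, mem_univ _⟩
      _ = ∑ v ∈ s.image Sigma.fst, a v := by simp [card_sigma]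
      _ ≤ #(s.biUnion t) := by rw [hbiUnion]; exact h _
  obtain ⟨f, hfinj, hft⟩ := (all_card_le_biUnion_card_iff_exists_injective t).1 hall
  have hinv : ∀ e v,
      (Function.partialInv f e).map Sigma.fst = some v ↔ ∃ i, f ⟨v, i⟩ = e := by
    intro e v
    simp only [Option.map_eq_some_iff, hfinj.isPartialInv _ e]
    constructor
    · rintro ⟨⟨w, i⟩, hx, rfl⟩
      exact ⟨i, hx⟩
    · rintro ⟨i, hi⟩
      exact ⟨⟨v, i⟩, hi, rfl⟩
  refine ⟨fun e => (Function.partialInv f e).map Sigma.fst, fun e v he => ?_,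
    funext fun v => ?_⟩
  · obtain ⟨i, rfl⟩ := (hinv e v).1 he
    simpa [t] using hft ⟨v, i⟩
  · have hfilter : ({e | (Function.partialInv f e).map Sigma.fst = some v} : Finset E) =
        univ.image fun i : Fin (a v) => f ⟨v, i⟩ := by
      ext e
      simp [hinv]
    rw [scoreVector, hfilter,
      card_image_of_injective _ fun i j hij => by simpa using hfinj hij]
    simp

theorem eq_of_mem_extremePoints_of_add_eq_two_smul {E : Type*} [AddCommGroup E] [Module ℝ E]
    {A : Set E} {x y z : E} (hx : x ∈ A.extremePoints ℝ) (hy : y ∈ A) (hz : z ∈ A)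
    (h : y + z = (2 : ℝ) • x) : y = x := by
  refine (mem_extremePoints_iff_left.1 hx).2 y hy z hz
    ⟨1 / 2, 1 / 2, by norm_num, by norm_num, by norm_num, ?_⟩
  rw [← smul_add, h, smul_smul]
  norm_num

theorem LinearMap.eq_of_le_of_mem_openSegment {E : Type*} [AddCommGroup E] [Module ℝ E]
    (f : E →ₗ[ℝ] ℝ) {x y z : E} {c : ℝ} (hz : z ∈ openSegment ℝ x y) (hx : f x ≤ c)
    (hy : f y ≤ c) (hfz : f z = c) : f x = c := by
  obtain ⟨s, t, hs, ht, hst, rfl⟩ := hz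
  simp only [map_add, map_smul, smul_eq_mul] at hfz
  have hc : s * c + t * c = c := by rw [← add_mul, hst, one_mul]
  refine le_antisymm hx (not_lt.1 fun hlt => ?_)
  linarith [mul_lt_mul_of_pos_left hlt hs, mul_le_mul_of_nonneg_left hy ht.le]

theorem natCast_mem_extremePoints_scorePolytope_of_tight {V E : Type*} [Fintype E]
    [DecidableEq V] {ends : E → Sym2 V} {a : V → ℕ}
    (ha : (fun v => (a v : ℝ)) ∈ scorePolytope ends)
    (htight : ∀ v, a v ≠ 0 → ∃ S, v ∈ S ∧ ∑ u ∈ S, a u = multigraphKappa ends S ∧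
      ∑ u ∈ S.erase v, a u = multigraphKappa ends (S.erase v)) :
    (fun v => (a v : ℝ)) ∈ (scorePolytope ends).extremePoints ℝ := by
  refine mem_extremePoints_iff_left.2 ⟨ha, fun x hx y hy hseg => funext fun v => ?_⟩
  have hface : ∀ S, ∑ u ∈ S, a u = multigraphKappa ends S →
      ∑ u ∈ S, x u = multigraphKappa ends S := fun S hS => by
    simpa using (∑ u ∈ S, LinearMap.proj u).eq_of_le_of_mem_openSegment hseg
      (by simpa using hx.2 S) (by simpa using hy.2 S)
      (by simpa using congrArg (Nat.cast : ℕ → ℝ) hS)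
  by_cases hav : a v = 0
  · simpa [hav] using (-LinearMap.proj v).eq_of_le_of_mem_openSegment (c := 0) hseg
      (by simpa using hx.1 v) (by simpa using hy.1 v) (by simp [hav])
  · obtain ⟨S, hvS, hS, hSv⟩ := htight v hav
    have hxS := hface S hS
    rw [← add_sum_erase S _ hvS, hface _ hSv] at hxS
    rw [← add_sum_erase S _ hvS, hSv] at hS
    have : (a v : ℝ) + multigraphKappa ends (S.erase v) = multigraphKappa ends S := mod_cast hS
    linarith

theorem IsPartialOrientation.eq_of_scoreVector_eq_of_mem_extremePoints {V E : Type*} [Fintype E]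
    [DecidableEq V] {ends : E → Sym2 V} {o o' : E → Option V} (ho : IsPartialOrientation ends o)
    (ho' : IsPartialOrientation ends o') (h : scoreVector o' = scoreVector o)
    (hext : (fun v => (scoreVector o v : ℝ)) ∈ (scorePolytope ends).extremePoints ℝ) :
    o' = o := by
  classical
  by_contra hne
  obtain ⟨e, he⟩ := Function.ne_iff.1 hne
  -- Exchanging the orientation of `e` between `o` and `o'` gives two score vectors with
  -- midpoint `scoreVector o`.
  have hp := scoreVector_update_add o e (o' e)
  have hq := scoreVector_update_add o' e (o e)
  have hsum : (fun v => (scoreVector (Function.update o e (o' e)) v : ℝ)) +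
      (fun v => (scoreVector (Function.update o' e (o e)) v : ℝ)) =
      (2 : ℝ) • fun v => (scoreVector o v : ℝ) := by
    funext v
    have hpv := hp v
    have hqv := hq v
    rw [congrFun h v] at hqv
    simp only [Pi.add_apply, Pi.smul_apply, smul_eq_mul]
    exact_mod_cast (by omega : _ = 2 * scoreVector o v)
  have hpo := eq_of_mem_extremePoints_of_add_eq_two_smul hext
    (ho.update fun v hv => ho' e v hv).scoreVector_mem_scorePolytope
    (ho'.update fun v hv => ho e v hv).scoreVector_mem_scorePolytope hsum
  refine he (Option.ext fun v => ?_)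
  have hpv := hp v
  rw [show scoreVector (Function.update o e (o' e)) v = scoreVector o v from
    mod_cast congrFun hpo v] at hpv
  by_cases h1 : o e = some v <;> by_cases h2 : o' e = some v <;> simp_all

variable {V E : Type*} in
def OrientedAdj (ends : E → Sym2 V) (o : E → Option V) (u w : V) : Prop :=
  u ≠ w ∧ ∃ e, o e = some u ∧ w ∈ ends e

namespace IsPartialOrientation

variable {V E : Type*} [Fintype E] [DecidableEq V] {ends : E → Sym2 V} {o : E → Option V}

theorem exists_eq_some_of_scoreVector_pos (ho : IsPartialOrientation ends o)
    (huniq : ∀ o', IsPartialOrientation ends o' → scoreVector o' = scoreVector o → o' = o)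
    {v : V} (hv : 0 < scoreVector o v) {e : E} (he : v ∈ ends e) : ∃ w, o e = some w := by
  classical
  refine Option.ne_none_iff_exists'.1 fun hnone => ?_
  obtain ⟨f, hf⟩ : ∃ f, o f = some v := by
    simpa [scoreVector, card_pos, Finset.Nonempty] using hv
  have hfe : e ≠ f := by rintro rfl; simp_all
  -- Orienting `e` instead of `f` away from `v` keeps the score vector.
  have hswap : IsPartialOrientation ends (o ∘ Equiv.swap e f) := by
    intro e' w hw
    simp only [Function.comp_apply] at hw
    rcases eq_or_ne e' e with rfl | h1
    · rw [Equiv.swap_apply_left, hf] at hw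
      exact Option.some_injective V hw ▸ he
    rcases eq_or_ne e' f with rfl | h2
    · rw [Equiv.swap_apply_right, hnone] at hw
      cases hw
    · rw [Equiv.swap_apply_of_ne_of_ne h1 h2] at hw
      exact ho e' w hw
  have := congrFun (huniq _ hswap (scoreVector_comp_perm o _)) e
  simp [Equiv.swap_apply_left, hf, hnone] at this

theorem exists_ne_scoreVector_eq_of_cycles (ho : IsPartialOrientation ends o) {X : Finset V}
    (hX : X.Nonempty) {p : V → V} (hpX : ∀ x ∈ X, p x ∈ X) (hp : Set.InjOn p X)
    (hadj : ∀ x ∈ X, OrientedAdj ends o (p x) x) :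
    ∃ o', o' ≠ o ∧ IsPartialOrientation ends o' ∧ scoreVector o' = scoreVector o := by
  classical
  obtain ⟨x₀, hx₀⟩ := hX
  have : Nonempty V := ⟨x₀⟩
  have : Nonempty E := ⟨(hadj x₀ hx₀).2.choose⟩
  choose! g hg hgx using fun x hx => (hadj x hx).2
  have hginj : Set.InjOn g X := fun x hx y hy hxy =>
    hp hx hy (Option.some_injective V ((hg x hx).symm.trans (hxy ▸ hg y hy)))
  have hpimage : X.image p = X :=
    eq_of_subset_of_card_le (image_subset_iff.2 hpX) (card_image_of_injOn hp).ge
  -- Reverse every edge `g x`, so that it is oriented away from `x` instead of `p x`.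
  let o' : E → Option V := fun e =>
    if e ∈ X.image g then some (Function.invFunOn g X e) else o e
  have ho'g : ∀ x ∈ X, o' (g x) = some x := fun x hx => by
    simp only [o', if_pos (mem_image_of_mem g hx), hginj.leftInvOn_invFunOn hx]
  refine ⟨o', fun h => ?_, fun e v hev => ?_, ?_⟩
  · have := congrFun h (g x₀)
    rw [ho'g x₀ hx₀, hg x₀ hx₀] at this
    exact (hadj x₀ hx₀).1 (Option.some_injective V this).symm
  · by_cases he : e ∈ X.image g
    · obtain ⟨x, hx, rfl⟩ := mem_image.1 he
      rw [ho'g x hx] at hev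
      exact Option.some_injective V hev ▸ hgx x hx
    · exact ho e v ((if_neg he).symm.trans hev)
  · refine scoreVector_eq_of_eqOn_compl (X.image g) (fun e he => if_neg he) fun v => ?_
    rw [sum_image hginj, sum_image hginj]
    calc ∑ x ∈ X, (if o' (g x) = some v then 1 else 0)
        = ∑ x ∈ X.image p, (if some x = some v then 1 else 0) := by
          rw [hpimage]
          exact sum_congr rfl fun x hx => by rw [ho'g x hx]
      _ = ∑ x ∈ X, (if o (g x) = some v then 1 else 0) := by
          rw [sum_image hp]
          exact sum_congr rfl fun x hx => by rw [hg x hx]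

theorem wellFounded_orientedAdj [Fintype V] (ho : IsPartialOrientation ends o)
    (huniq : ∀ o', IsPartialOrientation ends o' → scoreVector o' = scoreVector o → o' = o) :
    WellFounded (OrientedAdj ends o) := by
  classical
  rw [WellFounded.wellFounded_iff_has_min]
  by_contra! hcyc
  obtain ⟨s, ⟨x₀, hx₀⟩, hs⟩ := hcyc
  obtain ⟨X, ⟨hXne, hX⟩, hXmin⟩ := exists_minimal_of_wellFoundedLT
    (fun X : Finset V => X.Nonempty ∧ ∀ w ∈ X, ∃ u ∈ X, OrientedAdj ends o u w)
    ⟨s.toFinset, ⟨x₀, by simpa using hx₀⟩,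
      fun w hw => by simpa using hs w (by simpa using hw)⟩
  choose! p hpX hp using hX
  -- By minimality of `X`, the predecessor map `p` permutes `X`.
  have hpimage : X.image p = X := by
    refine le_antisymm (image_subset_iff.2 hpX) (hXmin ⟨hXne.image p, fun w hw => ?_⟩
      (image_subset_iff.2 hpX))
    have hwX : w ∈ X := image_subset_iff.2 hpX hw
    exact ⟨p w, mem_image_of_mem p hwX, hp w hwX⟩
  obtain ⟨o', hne, ho', hscore⟩ := ho.exists_ne_scoreVector_eq_of_cycles hXne hpX
    (card_image_iff.1 (congrArg card hpimage)) hp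
  exact hne (huniq o' ho' hscore)

theorem exists_tight_erase [Fintype V] (ho : IsPartialOrientation ends o)
    (hpos : ∀ v, 0 < scoreVector o v → ∀ e, v ∈ ends e → ∃ w, o e = some w)
    (hwf : WellFounded (OrientedAdj ends o)) {v : V} (hv : 0 < scoreVector o v) :
    ∃ S, v ∈ S ∧ ∑ u ∈ S, scoreVector o u = multigraphKappa ends S ∧
      ∑ u ∈ S.erase v, scoreVector o u = multigraphKappa ends (S.erase v) := by
  classical
  -- Edges at `S` are oriented out of `S`; acyclicity forbids those out of `v` into `S`.
  let S : Finset V := {u | Relation.ReflTransGen (OrientedAdj ends o) u v}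
  have hsrc : ∀ u ∈ S, ∀ e, u ∈ ends e →
      ∃ w ∈ S, o e = some w ∧ (w = v → u = v) := by
    intro u hu e hue
    have hu' : Relation.ReflTransGen (OrientedAdj ends o) u v := by simpa [S] using hu
    have hupos : 0 < scoreVector o u := by
      rcases hu'.cases_head with rfl | ⟨w, ⟨-, f, hf, -⟩, -⟩
      · exact hv
      · exact card_pos.2 ⟨f, by simpa using hf⟩
    obtain ⟨w, hw⟩ := hpos u hupos e hue
    by_cases hwu : w = u
    · exact ⟨w, hwu ▸ hu, hw, fun hwv => hwu ▸ hwv⟩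
    · have hadj : OrientedAdj ends o w u := ⟨hwu, e, hw, hue⟩
      refine ⟨w, by simpa [S] using hu'.head hadj, hw, fun hwv => ?_⟩
      subst hwv
      exact (hwf.transGen.irrefl.irrefl _ (Relation.TransGen.head' hadj hu')).elim
  refine ⟨S, by simpa [S] using Relation.ReflTransGen.refl,
    ho.sum_scoreVector_eq_kappa fun e u hu hue => ?_,
    ho.sum_scoreVector_eq_kappa fun e u hu hue => ?_⟩
  · obtain ⟨w, hwS, hw, -⟩ := hsrc u hu e hue
    exact ⟨w, hwS, hw⟩
  · obtain ⟨huv, hu⟩ := mem_erase.1 hu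
    obtain ⟨w, hwS, hw, hwv⟩ := hsrc u hu e hue
    exact ⟨w, mem_erase.2 ⟨fun h => huv (hwv h), hwS⟩, hw⟩

theorem scoreVector_mem_extremePoints [Fintype V] (ho : IsPartialOrientation ends o)
    (huniq : ∀ o', IsPartialOrientation ends o' → scoreVector o' = scoreVector o → o' = o) :
    (fun v => (scoreVector o v : ℝ)) ∈ (scorePolytope ends).extremePoints ℝ :=
  natCast_mem_extremePoints_scorePolytope_of_tight ho.scoreVector_mem_scorePolytope fun _ hv =>
    ho.exists_tight_erase (fun _ hu _ he => ho.exists_eq_some_of_scoreVector_pos huniq hu he)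
      (ho.wellFounded_orientedAdj huniq) (Nat.pos_of_ne_zero hv)

end IsPartialOrientation

/-- A lattice point `a : V → ℕ` is an extreme point of the score vector polytope
if and only if it is the score vector of a unique partial orientation. -/
theorem extremePoint_scorePolytope_iff_unique_orientation
    {V E : Type*} [Fintype V] [Fintype E] [DecidableEq V]
    (ends : E → Sym2 V) (a : V → ℕ) :
    (fun v => (a v : ℝ)) ∈ Set.extremePoints ℝ (scorePolytope ends) ↔
      ∃! o : E → Option V, IsPartialOrientation ends o ∧ scoreVector o = a := by
  constructor
  · intro hext
    obtain ⟨o, ho, rfl⟩ :=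
      exists_isPartialOrientation_scoreVector_eq ends a (natCast_mem_scorePolytope_iff.1 hext.1)
    exact ⟨o, ⟨ho, rfl⟩, fun o' ⟨ho', h⟩ =>
      ho.eq_of_scoreVector_eq_of_mem_extremePoints ho' h hext⟩
  · rintro ⟨o, ⟨ho, rfl⟩, huniq⟩
    exact ho.scoreVector_mem_extremePoints fun o' ho' h => huniq o' ⟨ho', h⟩
end

section
/- Let G = (V, E, ends) be a multigraph and let a : V → ℕ. The point (a_v)_{v∈V} ∈ ℝ^V is an extreme point of the score vector polytope P_G if and only if there exist r ≥ 0 and pairwise distinct vertices v_1, …, v_r ∈ V such that a_{v_i} equals the number of edges e ∈ E with ends e = s(v_i, u) for some u ∉ {v_1, …, v_{i−1}} (loops at v_i are counted, once each) for every 1 ≤ i ≤ r, and a_v = 0 for every v ∉ {v_1, …, v_r}. -/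
/-!
The score vector polytope is the polymatroid of the degree function `κ`, which is monotone and
submodular, and the ordered form says that `a` is the vector produced by Edmonds' greedy algorithm
along `v_1, …, v_r`. Both directions peel off the first vertex: if `a_v = κ_{v}`, then `a` is a
vertex of `P_κ` iff `a` with its `v`-coordinate set to zero is a vertex of the polymatroid of the
contraction `S ↦ κ(S ∪ {v}) - κ_{v}`. A nonzero integral vertex always has such a `v` with
`a_v > 0`: an inclusion-minimal tight set containing a positive coordinate is a singleton, because
two positive elements of it would be separated by a tight set (otherwise moving one unit from one
to the other, or back, keeps `a` inside the polytope), and by submodularity tight sets are closed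
under intersection. For a multigraph, `κ(W ∪ {w}) - κ(W)` counts the edges from `w` to vertices
outside `W`, loops at `w` included.
-/

open Finset

open Function

theorem update_mem_openSegment {𝕜 ι E : Type*} [Semiring 𝕜] [PartialOrder 𝕜] [DecidableEq ι]
    [AddCommMonoid E] [Module 𝕜 E] {x y z : ι → E} (h : x ∈ openSegment 𝕜 y z) (i : ι) (c : E) :
    update x i c ∈ openSegment 𝕜 (update y i c) (update z i c) := by
  obtain ⟨s, t, hs, ht, hst, rfl⟩ := h
  refine ⟨s, t, hs, ht, hst, ?_⟩
  rw [← update_smul, ← update_smul, ← update_add, ← add_smul, hst, one_smul]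

section LinearOrderedField

variable {𝕜 : Type*} [Field 𝕜] [LinearOrder 𝕜] [IsStrictOrderedRing 𝕜]

theorem eq_zero_of_add_mem_of_sub_mem {E : Type*} [AddCommGroup E] [Module 𝕜 E] {A : Set E}
    {x d : E} (hx : x ∈ A.extremePoints 𝕜) (hadd : x + d ∈ A) (hsub : x - d ∈ A) : d = 0 := by
  have h := hx.2 hadd hsub ⟨1 / 2, 1 / 2, by norm_num, by norm_num, by norm_num, by module⟩
  simpa using h

variable {ι : Type*} {x y z : ι → 𝕜}

theorem apply_eq_of_mem_openSegment_of_le (h : x ∈ openSegment 𝕜 y z) {i : ι}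
    (hy : y i ≤ x i) (hz : z i ≤ x i) : y i = x i ∧ z i = x i := by
  obtain ⟨s, t, hs, ht, hst, rfl⟩ := h
  simp only [Pi.add_apply, Pi.smul_apply, smul_eq_mul] at hy hz ⊢
  obtain rfl : t = 1 - s := by linarith
  constructor <;> nlinarith

theorem apply_eq_of_mem_openSegment_of_ge (h : x ∈ openSegment 𝕜 y z) {i : ι}
    (hy : x i ≤ y i) (hz : x i ≤ z i) : y i = x i ∧ z i = x i := by
  obtain ⟨s, t, hs, ht, hst, rfl⟩ := h
  simp only [Pi.add_apply, Pi.smul_apply, smul_eq_mul] at hy hz ⊢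
  obtain rfl : t = 1 - s := by linarith
  constructor <;> nlinarith

end LinearOrderedField

theorem natCast_update {V : Type*} [DecidableEq V] (a : V → ℕ) (v : V) :
    (fun w => (update a v 0 w : ℝ)) = update (fun w => (a w : ℝ)) v 0 := by
  ext w
  rcases eq_or_ne w v with rfl | h <;> simp [update_of_ne, *]

namespace Fin

variable {α : Type*} [DecidableEq α] {r : ℕ}

theorem image_cons_Iio_succ (v : α) (vs : Fin r → α) (k : Fin r) :
    (Iio k.succ).image (cons v vs : Fin (r + 1) → α) = insert v ((Iio k).image vs) := by
  ext w
  simp [exists_fin_succ, succ_pos, eq_comm]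

theorem image_cons_Iic_succ (v : α) (vs : Fin r → α) (k : Fin r) :
    (Iic k.succ).image (cons v vs : Fin (r + 1) → α) = insert v ((Iic k).image vs) := by
  ext w
  simp [exists_fin_succ, eq_comm]

end Fin

namespace Polymatroid

variable {V : Type*} {f : Finset V → ℕ}

def polytope (f : Finset V → ℕ) : Set (V → ℝ) :=
  {x | (∀ v, 0 ≤ x v) ∧ ∀ S : Finset V, ∑ v ∈ S, x v ≤ (f S : ℝ)}

theorem natCast_mem_polytope_iff {a : V → ℕ} :
    (fun v => (a v : ℝ)) ∈ polytope f ↔ ∀ S, ∑ v ∈ S, a v ≤ f S := by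
  simp only [polytope, Set.mem_ofPred_eq, Nat.cast_nonneg, implies_true, true_and]
  exact_mod_cast Iff.rfl

theorem apply_le_of_mem_polytope {x : V → ℝ} (hx : x ∈ polytope f) (v : V) : x v ≤ f {v} := by
  simpa using hx.2 {v}

theorem zero_mem_extremePoints_polytope (f : Finset V → ℕ) :
    (0 : V → ℝ) ∈ (polytope f).extremePoints ℝ :=
  ⟨⟨fun _ => le_rfl, fun S => by simp⟩, fun _ hy _ hz hyz =>
    funext fun v => (apply_eq_of_mem_openSegment_of_ge hyz (hy.1 v) (hz.1 v)).1⟩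

variable {a : V → ℕ}

theorem exists_sum_eq_and_sum_ne_zero (ha : (fun v => (a v : ℝ)) ∈ (polytope f).extremePoints ℝ)
    {d : V → ℤ} (hd : d ≠ 0) (hda : ∀ v, |d v| ≤ a v) (hdS : ∀ S, |∑ v ∈ S, d v| ≤ 1) :
    ∃ S, ∑ v ∈ S, a v = f S ∧ ∑ v ∈ S, d v ≠ 0 := by
  by_contra! htight
  have hmem := natCast_mem_polytope_iff.1 ha.1
  -- the constraints that `e` moves are slack, and by integrality slack by at least `1`
  have hshift (e : V → ℤ) (he : ∀ v, |e v| ≤ a v) (heS : ∀ S, |∑ v ∈ S, e v| ≤ 1)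
      (htight : ∀ S, ∑ v ∈ S, a v = f S → ∑ v ∈ S, e v = 0) :
      (fun v => (a v : ℝ)) + (fun v => (e v : ℝ)) ∈ polytope f := by
    refine ⟨fun v => ?_, fun S => ?_⟩
    · have := (abs_le.1 (he v)).1
      have : (0 : ℤ) ≤ a v + e v := by linarith
      simpa using (by exact_mod_cast this : (0 : ℝ) ≤ a v + e v)
    · have : ((∑ v ∈ S, a v : ℕ) : ℤ) + ∑ v ∈ S, e v ≤ f S := by
        by_cases hS : ∑ v ∈ S, a v = f S
        · rw [htight S hS]
          exact_mod_cast (hmem S)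
        · have := hmem S
          have := (abs_le.1 (heS S)).2
          omega
      simp only [Pi.add_apply, sum_add_distrib]
      exact_mod_cast this
  have hadd := hshift d hda hdS htight
  have hsub := hshift (-d) (by simpa using hda) (by simpa using hdS) (by simpa using htight)
  rw [show (fun v => ((-d) v : ℝ)) = -fun v => (d v : ℝ) by ext; simp, ← sub_eq_add_neg] at hsub
  have := eq_zero_of_add_mem_of_sub_mem ha hadd hsub
  exact hd (funext fun v => by simpa using congrFun this v)

variable [DecidableEq V]

def Submodular (f : Finset V → ℕ) : Prop :=
  ∀ S T, f (S ∪ T) + f (S ∩ T) ≤ f S + f T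

/-- For monotone `f` the truncated subtraction never truncates (`contract_add_singleton`). -/
def contract (f : Finset V → ℕ) (v : V) (S : Finset V) : ℕ :=
  f (insert v S) - f {v}

theorem Submodular.insert_le (hf : Submodular f) (v : V) (S : Finset V) :
    f (insert v S) ≤ f {v} + f S := by
  have := hf {v} S
  rw [← insert_eq] at this
  omega

theorem contract_empty (f : Finset V → ℕ) (v : V) : contract f v ∅ = 0 := by
  simp [contract]

theorem contract_add_singleton (hf : Monotone f) (v : V) (S : Finset V) :
    contract f v S + f {v} = f (insert v S) :=
  Nat.sub_add_cancel (hf (singleton_subset_iff.2 (mem_insert_self v S)))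

theorem monotone_contract (hf : Monotone f) (v : V) : Monotone (contract f v) :=
  fun _ _ h => Nat.sub_le_sub_right (hf (insert_subset_insert v h)) _

theorem Submodular.contract (hsub : Submodular f) (hmono : Monotone f) (v : V) :
    Submodular (contract f v) := by
  intro S T
  have := hsub (insert v S) (insert v T)
  rw [← insert_union_distrib, ← insert_inter_distrib] at this
  have := contract_add_singleton hmono v S
  have := contract_add_singleton hmono v T
  have := contract_add_singleton hmono v (S ∪ T)
  have := contract_add_singleton hmono v (S ∩ T)
  omega

theorem update_mem_polytope_of_mem_contract (hsub : Submodular f) (hmono : Monotone f) {v : V}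
    {y : V → ℝ} (hy : y ∈ polytope (contract f v)) : update y v (f {v} : ℝ) ∈ polytope f := by
  refine ⟨fun w => ?_, fun S => ?_⟩
  · rcases eq_or_ne w v with rfl | h
    · simp
    · simpa [update_of_ne h] using hy.1 w
  have hc (T : Finset V) : (contract f v T : ℝ) + f {v} = f (insert v T) := by
    exact_mod_cast contract_add_singleton hmono v T
  by_cases hv : v ∈ S
  · have := hy.2 (S.erase v)
    have := hc (S.erase v)
    rw [insert_erase hv] at this
    rw [sum_update_of_mem hv, sdiff_singleton_eq_erase]
    linarith
  · have := hy.2 S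
    have := hc S
    have : (f (insert v S) : ℝ) ≤ f {v} + f S := by exact_mod_cast hsub.insert_le v S
    rw [sum_update_of_notMem hv]
    linarith

theorem update_zero_mem_polytope_contract (hmono : Monotone f) {v : V} {y : V → ℝ}
    (hy : y ∈ polytope f) (hyv : y v = f {v}) : update y v 0 ∈ polytope (contract f v) := by
  refine ⟨fun w => ?_, fun S => ?_⟩
  · rcases eq_or_ne w v with rfl | h
    · simp
    · simpa [update_of_ne h] using hy.1 w
  have := hy.2 (insert v S)
  have : (contract f v S : ℝ) + f {v} = f (insert v S) := by
    exact_mod_cast contract_add_singleton hmono v S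
  have : ∑ w ∈ S, update y v 0 w + y v = ∑ w ∈ insert v S, y w := by
    by_cases hv : v ∈ S
    · rw [sum_update_of_mem hv, insert_eq_of_mem hv, sum_eq_add_sum_sdiff_singleton_of_mem hv]
      ring
    · rw [sum_update_of_notMem hv, sum_insert hv, add_comm]
  linarith

theorem mem_extremePoints_polytope_iff_contract (hsub : Submodular f) (hmono : Monotone f)
    {x : V → ℝ} {v : V} (hxv : x v = f {v}) :
    x ∈ (polytope f).extremePoints ℝ ↔
      update x v 0 ∈ (polytope (contract f v)).extremePoints ℝ := by
  have hx : update (update x v 0) v (f {v} : ℝ) = x := by rw [update_idem, ← hxv, update_eq_self]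
  constructor
  · intro hext
    refine ⟨update_zero_mem_polytope_contract hmono hext.1 hxv, fun y hy z hz hyz => ?_⟩
    have hyv : y v = 0 := by
      simpa using (apply_eq_of_mem_openSegment_of_ge hyz (i := v) (by simpa using hy.1 v)
        (by simpa using hz.1 v)).1
    have hlift := hext.2 (update_mem_polytope_of_mem_contract hsub hmono hy)
      (update_mem_polytope_of_mem_contract hsub hmono hz) (hx ▸ update_mem_openSegment hyz v _)
    rw [← hlift, update_idem, ← hyv, update_eq_self]
  · intro hext
    refine ⟨hx ▸ update_mem_polytope_of_mem_contract hsub hmono hext.1, fun y hy z hz hyz => ?_⟩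
    obtain ⟨hyv, hzv⟩ := apply_eq_of_mem_openSegment_of_le hyz (i := v)
      (hxv ▸ apply_le_of_mem_polytope hy v) (hxv ▸ apply_le_of_mem_polytope hz v)
    rw [hxv] at hyv hzv
    have hdrop := hext.2 (update_zero_mem_polytope_contract hmono hy hyv)
      (update_zero_mem_polytope_contract hmono hz hzv) (update_mem_openSegment hyz v 0)
    rw [← hx, ← hdrop, update_idem, ← hyv, update_eq_self]

def IsGreedyVector (f : Finset V → ℕ) {r : ℕ} (vs : Fin r → V) (a : V → ℕ) : Prop :=
  Injective vs ∧ (∀ i, a (vs i) + f ((Iio i).image vs) = f ((Iic i).image vs)) ∧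
    ∀ v, (∀ i, vs i ≠ v) → a v = 0

theorem isGreedyVector_cons_iff (hf : f ∅ = 0) (hmono : Monotone f) {r : ℕ} {v : V}
    {vs : Fin r → V} {a : V → ℕ} :
    IsGreedyVector f (Fin.cons v vs : Fin (r + 1) → V) a ↔
      v ∉ Set.range vs ∧ a v = f {v} ∧ IsGreedyVector (contract f v) vs (update a v 0) := by
  have hIio : (Iio (0 : Fin (r + 1))).image (Fin.cons v vs) = ∅ := by simp [bot_eq_zero]
  have hIic : (Iic (0 : Fin (r + 1))).image (Fin.cons v vs) = {v} := by ext; simp [eq_comm]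
  have hstep (hv : v ∉ Set.range vs) (i : Fin r) :
      a (vs i) + f (insert v ((Iio i).image vs)) = f (insert v ((Iic i).image vs)) ↔
        update a v 0 (vs i) + contract f v ((Iio i).image vs) =
          contract f v ((Iic i).image vs) := by
    rw [update_of_ne fun h => hv ⟨i, h⟩]
    have := contract_add_singleton hmono v ((Iio i).image vs)
    have := contract_add_singleton hmono v ((Iic i).image vs)
    omega
  simp only [IsGreedyVector, Fin.cons_injective_iff, Fin.forall_fin_succ, Fin.cons_zero,
    Fin.cons_succ, Fin.image_cons_Iio_succ, Fin.image_cons_Iic_succ, hIio, hIic, hf, add_zero]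
  constructor
  · rintro ⟨⟨hv, hinj⟩, ⟨hav, hsucc⟩, hzero⟩
    refine ⟨hv, hav, hinj, fun i => (hstep hv i).1 (hsucc i), fun w hw => ?_⟩
    rcases eq_or_ne w v with rfl | h
    · simp
    · rw [update_of_ne h]
      exact hzero w ⟨h.symm, hw⟩
  · rintro ⟨hv, hav, hinj, hsucc, hzero⟩
    refine ⟨⟨hv, hinj⟩, ⟨hav, fun i => (hstep hv i).2 (hsucc i)⟩, fun w ⟨hvw, hw⟩ => ?_⟩
    simpa [update_of_ne (Ne.symm hvw)] using hzero w hw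

theorem sum_inter_eq_of_sum_eq (hsub : Submodular f) (ha : ∀ S, ∑ v ∈ S, a v ≤ f S)
    {S T : Finset V} (hS : ∑ v ∈ S, a v = f S) (hT : ∑ v ∈ T, a v = f T) :
    ∑ v ∈ S ∩ T, a v = f (S ∩ T) := by
  have := hsub S T
  have := ha (S ∪ T)
  have := ha (S ∩ T)
  have := sum_union_inter (s₁ := S) (s₂ := T) (f := a)
  omega

theorem exists_mem_sum_eq_of_pos (ha : (fun v => (a v : ℝ)) ∈ (polytope f).extremePoints ℝ) {u : V}
    (hu : 0 < a u) : ∃ S, ∑ v ∈ S, a v = f S ∧ u ∈ S := by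
  obtain ⟨S, hS, hne⟩ := exists_sum_eq_and_sum_ne_zero ha (d := Pi.single u 1)
    (fun h => by simpa using congrFun h u)
    (fun v => by
      rcases eq_or_ne v u with rfl | hvu
      · simp [Nat.one_le_iff_ne_zero, hu.ne']
      · simp [hvu])
    (fun S => by rw [sum_pi_single']; split_ifs <;> simp)
  refine ⟨S, hS, ?_⟩
  rw [sum_pi_single'] at hne
  by_contra h
  simp [h] at hne

theorem exists_sum_eq_separating (ha : (fun v => (a v : ℝ)) ∈ (polytope f).extremePoints ℝ)
    {u w : V} (hu : 0 < a u) (hw : 0 < a w) (huw : u ≠ w) :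
    ∃ S, ∑ v ∈ S, a v = f S ∧ (u ∈ S ↔ w ∉ S) := by
  have hsum (S : Finset V) : ∑ v ∈ S, (Pi.single u 1 - Pi.single w 1 : V → ℤ) v =
      (if u ∈ S then 1 else 0) - (if w ∈ S then 1 else 0) := by
    simp only [Pi.sub_apply, sum_sub_distrib, sum_pi_single']
  obtain ⟨S, hS, hne⟩ := exists_sum_eq_and_sum_ne_zero ha (d := Pi.single u 1 - Pi.single w 1)
    (fun h => by simpa [huw] using congrFun h u)
    (fun v => by
      rcases eq_or_ne v u with rfl | hvu
      · simp [huw, Nat.one_le_iff_ne_zero, hu.ne']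
      rcases eq_or_ne v w with rfl | hvw
      · simp [hvu, Nat.one_le_iff_ne_zero, hw.ne']
      · simp [hvu, hvw])
    (fun S => by rw [hsum]; split_ifs <;> simp)
  refine ⟨S, hS, ?_⟩
  rw [hsum] at hne
  split_ifs at hne <;> simp_all

theorem exists_pos_eq_singleton (hsub : Submodular f) (hmono : Monotone f)
    (ha : (fun v => (a v : ℝ)) ∈ (polytope f).extremePoints ℝ) {u : V} (hu : 0 < a u) :
    ∃ v, 0 < a v ∧ a v = f {v} := by
  have hmem := natCast_mem_polytope_iff.1 ha.1
  obtain ⟨S₀, hS₀, huS₀⟩ := exists_mem_sum_eq_of_pos ha hu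
  obtain ⟨T, ⟨hT, w, hwT, hw⟩, hmin⟩ := wellFounded_lt.has_min
    {T : Finset V | ∑ v ∈ T, a v = f T ∧ ∃ u ∈ T, 0 < a u} ⟨S₀, hS₀, u, huS₀, hu⟩
  refine ⟨w, hw, ?_⟩
  suffices T = {w} by rwa [this, sum_singleton] at hT
  refine eq_singleton_iff_unique_mem.2 ⟨hwT, fun x hxT => by_contra fun hxw => ?_⟩
  rcases (a x).eq_zero_or_pos with hx | hx
  · have htight : ∑ v ∈ T.erase x, a v = f (T.erase x) := by
      have := hmono (erase_subset x T)
      have := hmem (T.erase x)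
      rw [sum_erase T hx] at this ⊢
      omega
    exact hmin (T.erase x) ⟨htight, w, mem_erase.2 ⟨Ne.symm hxw, hwT⟩, hw⟩ (erase_ssubset hxT)
  · obtain ⟨S, hS, hsep⟩ := exists_sum_eq_separating ha hw hx (Ne.symm hxw)
    have hST := sum_inter_eq_of_sum_eq hsub hmem hS hT
    have hsmaller {y z : V} (hyS : y ∈ S) (hyT : y ∈ T) (hy : 0 < a y) (hzS : z ∉ S)
        (hzT : z ∈ T) : False :=
      hmin (S ∩ T) ⟨hST, y, mem_inter.2 ⟨hyS, hyT⟩, hy⟩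
        ((ssubset_iff_of_subset inter_subset_right).2 ⟨z, hzT, fun h => hzS (mem_inter.1 h).1⟩)
    by_cases hwS : w ∈ S
    · exact hsmaller hwS hwT hw (hsep.1 hwS) hxT
    · exact hsmaller (not_not.1 (mt hsep.2 hwS)) hxT hx hwS hwT

theorem mem_extremePoints_of_isGreedyVector (hf : f ∅ = 0) (hsub : Submodular f)
    (hmono : Monotone f) {r : ℕ} {vs : Fin r → V} (h : IsGreedyVector f vs a) :
    (fun v => (a v : ℝ)) ∈ (polytope f).extremePoints ℝ := by
  induction r generalizing f a with
  | zero =>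
    have : (fun v => (a v : ℝ)) = 0 := funext fun v => by simp [h.2.2 v finZeroElim]
    exact this ▸ zero_mem_extremePoints_polytope f
  | succ r ih =>
    rw [← Fin.cons_self_tail vs, isGreedyVector_cons_iff hf hmono] at h
    obtain ⟨-, hv, h⟩ := h
    rw [mem_extremePoints_polytope_iff_contract hsub hmono (by exact_mod_cast hv), ← natCast_update]
    exact ih (contract_empty f _) (hsub.contract hmono _) (monotone_contract hmono _) h

theorem exists_isGreedyVector_of_mem_extremePoints [Fintype V] (hf : f ∅ = 0)
    (hsub : Submodular f) (hmono : Monotone f)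
    (ha : (fun v => (a v : ℝ)) ∈ (polytope f).extremePoints ℝ) :
    ∃ (r : ℕ) (vs : Fin r → V), IsGreedyVector f vs a ∧ ∀ i, 0 < a (vs i) := by
  -- the positivity conjunct is what keeps `v` out of the order found for the contraction
  induction hn : ∑ v, a v using Nat.strong_induction_on generalizing f a with
  | _ n ih =>
  by_cases h0 : ∀ v, a v = 0
  · exact ⟨0, finZeroElim, ⟨injective_of_subsingleton _, finZeroElim, fun v _ => h0 v⟩, finZeroElim⟩
  obtain ⟨u, hu⟩ := not_forall.1 h0
  obtain ⟨v, hv, hvf⟩ := exists_pos_eq_singleton hsub hmono ha (Nat.pos_of_ne_zero hu)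
  rw [mem_extremePoints_polytope_iff_contract hsub hmono (by exact_mod_cast hvf),
    ← natCast_update] at ha
  have hlt : ∑ w, update a v 0 w < n := by
    rw [← hn, sum_update_of_mem (mem_univ v), sum_eq_add_sum_sdiff_singleton_of_mem (mem_univ v)]
    omega
  obtain ⟨r, vs, hvs, hpos⟩ := ih _ hlt (contract_empty f v) (hsub.contract hmono v)
    (monotone_contract hmono v) ha rfl
  have hv' : v ∉ Set.range vs := fun ⟨i, hi⟩ => by simpa [hi] using hpos i
  refine ⟨r + 1, Fin.cons v vs, (isGreedyVector_cons_iff hf hmono).2 ⟨hv', hvf, hvs⟩,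
    Fin.cases hv fun i => ?_⟩
  simpa [update_of_ne fun h => hv' ⟨i, h⟩] using hpos i

theorem mem_extremePoints_polytope_iff [Fintype V] (hf : f ∅ = 0) (hsub : Submodular f)
    (hmono : Monotone f) (a : V → ℕ) :
    (fun v => (a v : ℝ)) ∈ (polytope f).extremePoints ℝ ↔
      ∃ (r : ℕ) (vs : Fin r → V), IsGreedyVector f vs a :=
  ⟨fun ha => (exists_isGreedyVector_of_mem_extremePoints hf hsub hmono ha).imp
      fun _ ⟨vs, h, _⟩ => ⟨vs, h⟩,
    fun ⟨_, _, h⟩ => mem_extremePoints_of_isGreedyVector hf hsub hmono h⟩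

end Polymatroid

section Multigraph

variable {V E : Type*} [Fintype E] [DecidableEq V] (ends : E → Sym2 V)

theorem multigraphKappa_empty : multigraphKappa ends ∅ = 0 := by
  simp [multigraphKappa]

theorem multigraphKappa_mono : Monotone (multigraphKappa ends) := fun _ _ h =>
  card_le_card <| monotone_filter_right _ fun _ _ ⟨v, hv, he⟩ => ⟨v, h hv, he⟩

theorem multigraphKappa_submodular : Polymatroid.Submodular (multigraphKappa ends) := by
  classical
  intro S T
  let edgesAt (X : Finset V) := univ.filter fun e => ∃ v ∈ X, v ∈ ends e
  calc multigraphKappa ends (S ∪ T) + multigraphKappa ends (S ∩ T)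
      ≤ #(edgesAt S ∪ edgesAt T) + #(edgesAt S ∩ edgesAt T) := by
        refine add_le_add (le_of_eq (congrArg card ?_)) (card_le_card fun e => ?_)
        · ext e
          simp [edgesAt, or_and_right, exists_or]
        · simp only [edgesAt, mem_filter, mem_univ, true_and, mem_inter]
          rintro ⟨v, ⟨hvS, hvT⟩, he⟩
          exact ⟨⟨v, hvS, he⟩, v, hvT, he⟩
    _ = multigraphKappa ends S + multigraphKappa ends T := card_union_add_card_inter _ _

theorem multigraphKappa_insert [Fintype V] {w : V} {W : Finset V} (hw : w ∉ W) :
    multigraphKappa ends (insert w W) =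
      multigraphKappa ends W + (univ.filter fun e => ∃ u ∉ W, ends e = s(w, u)).card := by
  classical
  unfold multigraphKappa
  rw [← card_filter_add_card_filter_not (s := univ.filter fun e => ∃ v ∈ insert w W, v ∈ ends e)
    (fun e => ∃ v ∈ W, v ∈ ends e), filter_filter, filter_filter]
  congr 2 <;> ext e <;> simp only [mem_filter, mem_univ, true_and, mem_insert]
  · exact ⟨fun h => h.2, fun ⟨v, hv, he⟩ => ⟨⟨v, .inr hv, he⟩, v, hv, he⟩⟩
  · constructor
    · rintro ⟨⟨v, rfl | hv, he⟩, hW⟩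
      · obtain ⟨u, hu⟩ := Sym2.mem_iff_exists.1 he
        exact ⟨u, fun huW => hW ⟨u, huW, hu ▸ Sym2.mem_mk_right _ _⟩, hu⟩
      · exact absurd ⟨v, hv, he⟩ hW
    · rintro ⟨u, huW, he⟩
      refine ⟨⟨w, .inl rfl, he ▸ Sym2.mem_mk_left _ _⟩, fun ⟨v, hv, hve⟩ => ?_⟩
      rw [he, Sym2.mem_iff] at hve
      rcases hve with rfl | rfl
      exacts [hw hv, huW hv]

theorem isGreedyVector_multigraphKappa_iff [Fintype V] {r : ℕ} (vs : Fin r → V) (a : V → ℕ) :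
    Polymatroid.IsGreedyVector (multigraphKappa ends) vs a ↔ Function.Injective vs ∧
      (∀ i : Fin r, a (vs i) =
        (univ.filter fun e : E =>
          ∃ u : V, ends e = s(vs i, u) ∧ ∀ j : Fin r, j < i → u ≠ vs j).card) ∧
      (∀ v : V, (∀ i : Fin r, vs i ≠ v) → a v = 0) := by
  refine and_congr_right fun hinj => and_congr_left' (forall_congr' fun i => ?_)
  have hi : vs i ∉ (Iio i).image vs := by simp [hinj.eq_iff]
  have hcount : (univ.filter fun e => ∃ u ∉ (Iio i).image vs, ends e = s(vs i, u)) =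
      univ.filter fun e => ∃ u, ends e = s(vs i, u) ∧ ∀ j < i, u ≠ vs j := by
    ext e
    simp only [mem_filter, mem_univ, true_and, mem_image, mem_Iio, not_exists, not_and]
    exact exists_congr fun u => and_comm.trans (and_congr_right' (forall₂_congr fun j _ => ne_comm))
  rw [← Iio_insert, image_insert, multigraphKappa_insert ends hi, hcount]
  omega

end Multigraph

/-- A lattice point `a : V → ℕ` is an extreme point of the score vector polytope
if and only if there are pairwise distinct vertices `v_1, …, v_r` such that
`a (v i)` is the number of edges joining `v i` to a vertex outside
`{v_1, …, v_{i-1}}` (loops at `v i` counted once each), and `a` vanishes off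
`{v_1, …, v_r}`. -/
theorem extremePoint_scorePolytope_iff_ordered_form
    {V E : Type*} [Fintype V] [Fintype E] [DecidableEq V]
    (ends : E → Sym2 V) (a : V → ℕ) :
    (fun v => (a v : ℝ)) ∈ Set.extremePoints ℝ (scorePolytope ends) ↔
      ∃ (r : ℕ) (vs : Fin r → V), Function.Injective vs ∧
        (∀ i : Fin r, a (vs i) =
          (Finset.univ.filter fun e : E =>
            ∃ u : V, ends e = s(vs i, u) ∧ ∀ j : Fin r, j < i → u ≠ vs j).card) ∧
        (∀ v : V, (∀ i : Fin r, vs i ≠ v) → a v = 0) := by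
  rw [show scorePolytope ends = Polymatroid.polytope (multigraphKappa ends) from rfl,
    Polymatroid.mem_extremePoints_polytope_iff (multigraphKappa_empty ends)
      (multigraphKappa_submodular ends) (multigraphKappa_mono ends)]
  exact exists_congr fun r => exists_congr fun vs => isGreedyVector_multigraphKappa_iff ends vs a
end

section
/- Let G = (V, E, ends) be a multigraph with n = |V| vertices and let f be a weak parking function of G. Then there exists a bijection Π : Fin n ≃ V such that for every i ∈ Fin n, f(Π i) is at most the number of edges e ∈ E with ends e = s(Π i, Π j) for some j ≤ i (loops at Π i are counted, once each). -/
open Finset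

/-- `d̂_S(v)`: the number of edges joining `v` to `(V ∖ S) ∪ {v}`
(loops at `v` counted once each). -/
def dhat {V E : Type*} [Fintype V] [Fintype E] [DecidableEq V]
    (ends : E → Sym2 V) (S : Finset V) (v : V) : ℕ :=
  (Finset.univ.filter fun e : E => ∃ u : V, ends e = s(v, u) ∧ (u = v ∨ u ∉ S)).card

/-- A weak parking function of a multigraph: for every nonempty `S ⊆ V` there is
`v ∈ S` with `f v ≤ d̂_S(v)`. -/
def IsWeakParkingFunction {V E : Type*} [Fintype V] [Fintype E] [DecidableEq V]
    (ends : E → Sym2 V) (f : V → ℕ) : Prop :=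
  ∀ S : Finset V, S.Nonempty → ∃ v ∈ S, f v ≤ dhat ends S v

/-!
Order the vertices greedily: apply the parking condition to the set of vertices not yet placed,
place the vertex it provides next, and repeat. When `v` is placed, the vertices outside the
remaining set are exactly those placed before it, so `d̂` of the remaining set at `v` only counts
loops at `v` and edges from `v` to earlier vertices.
-/

section GreedyOrder

variable {V E : Type*} [DecidableEq V]

def remaining {n : ℕ} (S : Finset V) (g : Fin n → V) (i : Fin n) : Finset V :=
  {u ∈ S | ∀ j < i, g j ≠ u}

@[simp]
theorem remaining_cons_zero {n : ℕ} (S : Finset V) (v : V) (g : Fin n → V) :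
    remaining S (Fin.cons v g : Fin (n + 1) → V) 0 = S := by
  ext u
  simp [remaining]

@[simp]
theorem remaining_cons_succ {n : ℕ} (S : Finset V) (v : V) (g : Fin n → V) (i : Fin n) :
    remaining S (Fin.cons v g : Fin (n + 1) → V) i.succ = remaining (S.erase v) g i := by
  ext u
  simp only [remaining, mem_filter, mem_erase, Fin.forall_fin_succ, Fin.cons_zero,
    Fin.cons_succ, Fin.succ_pos, Fin.succ_lt_succ_iff, forall_const]
  tauto

theorem injective_of_forall_mem_remaining {n : ℕ} {S : Finset V} {g : Fin n → V}
    (hg : ∀ i, g i ∈ remaining S g i) : Function.Injective g := by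
  intro i j hij
  by_contra hne
  rcases lt_or_gt_of_ne hne with h | h
  · exact (mem_filter.1 (hg j)).2 i h hij
  · exact (mem_filter.1 (hg i)).2 j h hij.symm

variable [Fintype V] [Fintype E]

theorem dhat_remaining_univ_le {n : ℕ} (ends : E → Sym2 V) (g : Fin n → V) (i : Fin n) :
    dhat ends (remaining univ g i) (g i) ≤
      #{e | ∃ j ≤ i, ends e = s(g i, g j)} := by
  refine card_le_card fun e he => ?_
  obtain ⟨u, hends, hu⟩ := (mem_filter.1 he).2
  simp only [remaining, mem_filter, mem_univ, true_and, not_forall, not_not] at hu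
  refine mem_filter.2 ⟨mem_univ e, ?_⟩
  rcases hu with rfl | ⟨j, hji, rfl⟩
  · exact ⟨i, le_rfl, hends⟩
  · exact ⟨j, hji.le, hends⟩

theorem IsWeakParkingFunction.exists_greedy_order {ends : E → Sym2 V} {f : V → ℕ}
    (hf : IsWeakParkingFunction ends f) (n : ℕ) (S : Finset V) (hS : #S = n) :
    ∃ g : Fin n → V, ∀ i, g i ∈ remaining S g i ∧ f (g i) ≤ dhat ends (remaining S g i) (g i) := by
  induction n generalizing S with
  | zero => exact ⟨Fin.elim0, fun i => i.elim0⟩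
  | succ n ih =>
    obtain ⟨v, hvS, hv⟩ := hf S (card_pos.1 (by omega))
    obtain ⟨g, hg⟩ := ih (S.erase v) (by rw [card_erase_of_mem hvS, hS]; rfl)
    refine ⟨Fin.cons v g, Fin.cases ?_ fun i => ?_⟩
    · simpa using ⟨hvS, hv⟩
    · simpa using hg i

end GreedyOrder

/-- Every weak parking function is dominated by the parking function `f^Π` of some
linear ordering `Π` of the vertices: `f (π i)` is at most the number of edges
joining `π i` to some `π j` with `j ≤ i` (loops counted once each). -/
theorem weakParkingFunction_le_ordering
    {V E : Type*} [Fintype V] [Fintype E] [DecidableEq V]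
    (ends : E → Sym2 V) (f : V → ℕ)
    (hf : IsWeakParkingFunction ends f) :
    ∃ π : Fin (Fintype.card V) ≃ V, ∀ i : Fin (Fintype.card V),
      f (π i) ≤ (Finset.univ.filter fun e : E =>
        ∃ j : Fin (Fintype.card V), j ≤ i ∧ ends e = s(π i, π j)).card := by
  obtain ⟨g, hg⟩ := hf.exists_greedy_order _ univ card_univ
  have hbij : Function.Bijective g :=
    (Fintype.bijective_iff_injective_and_card g).2
      ⟨injective_of_forall_mem_remaining fun i => (hg i).1, Fintype.card_fin _⟩
  exact ⟨.ofBijective g hbij, fun i => (hg i).2.trans (dhat_remaining_univ_le ends g i)⟩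
end

section
/- Let G = (V, E, ends) be a multigraph and let f be a weak parking function of G. Then ∑_{v∈V} f(v) ≤ |E|. Moreover, f is maximal among weak parking functions for the pointwise order (i.e., every weak parking function g of G with f(v) ≤ g(v) for all v ∈ V satisfies g = f) if and only if ∑_{v∈V} f(v) = |E|. -/
open Finset

open Classical in
/-- `κ(S)`: number of edges with at least one endpoint in `S`. -/
noncomputable def kap {V E : Type*} [Fintype V] [Fintype E] [DecidableEq V]
    (ends : E → Sym2 V) (S : Finset V) : ℕ :=
  (Finset.univ.filter fun e : E => ∃ u ∈ ends e, u ∈ S).card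

lemma sym2_rep {V : Type*} (p : Sym2 V) : ∃ a b, p = s(a, b) := by
  induction p using Sym2.ind with
  | _ a b => exact ⟨a, b, rfl⟩

lemma dhat_anti {V E : Type*} [Fintype V] [Fintype E] [DecidableEq V]
    (ends : E → Sym2 V) {S T : Finset V} (hTS : T ⊆ S) (v : V) :
    dhat ends S v ≤ dhat ends T v := by
  apply Finset.card_le_card
  intro e he
  rw [Finset.mem_filter] at he ⊢
  obtain ⟨-, u, hu, h⟩ := he
  exact ⟨Finset.mem_univ e, u, hu, h.imp id fun h' hT => h' (hTS hT)⟩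

lemma kap_empty {V E : Type*} [Fintype V] [Fintype E] [DecidableEq V]
    (ends : E → Sym2 V) : kap ends (∅ : Finset V) = 0 := by
  simp [kap]

lemma kap_univ {V E : Type*} [Fintype V] [Fintype E] [DecidableEq V]
    (ends : E → Sym2 V) : kap ends (Finset.univ : Finset V) = Fintype.card E := by
  unfold kap
  rw [Finset.filter_true_of_mem, Finset.card_univ]
  intro e _
  obtain ⟨a, b, h⟩ := sym2_rep (ends e)
  exact ⟨a, by rw [h]; exact Sym2.mem_mk_left a b, Finset.mem_univ a⟩

lemma kap_erase_add {V E : Type*} [Fintype V] [Fintype E] [DecidableEq V]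
    (ends : E → Sym2 V) {S : Finset V} {v : V} (hv : v ∈ S) :
    kap ends (S.erase v) + dhat ends S v = kap ends S := by
  classical
  unfold kap dhat
  rw [← Finset.card_union_of_disjoint ?hdis]
  case hdis =>
    rw [Finset.disjoint_left]
    intro e he1 he2
    simp only [Finset.mem_filter, Finset.mem_univ, true_and] at he1 he2
    obtain ⟨u1, hu1, hm1⟩ := he1
    obtain ⟨u2, hu2, hor⟩ := he2
    rw [hu2, Sym2.mem_iff] at hu1
    rw [Finset.mem_erase] at hm1
    rcases hu1 with rfl | rfl
    · exact hm1.1 rfl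
    · rcases hor with rfl | h
      · exact hm1.1 rfl
      · exact h hm1.2
  · congr 1
    ext e
    simp only [Finset.mem_union, Finset.mem_filter, Finset.mem_univ, true_and]
    constructor
    · rintro (⟨u, hu, hm⟩ | ⟨u, hu, hor⟩)
      · exact ⟨u, hu, (Finset.mem_erase.mp hm).2⟩
      · exact ⟨v, by rw [hu]; exact Sym2.mem_mk_left v u, hv⟩
    · rintro ⟨u, hu, hm⟩
      obtain ⟨a, b, h⟩ := sym2_rep (ends e)
      · rw [h, Sym2.mem_iff] at hu
        by_cases hav : a = v <;> by_cases hbv : b = v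
        · exact Or.inr ⟨v, by rw [h, hav, hbv], Or.inl rfl⟩
        · by_cases hbS : b ∈ S
          · exact Or.inl ⟨b, by rw [h]; exact Sym2.mem_mk_right a b,
              Finset.mem_erase.mpr ⟨hbv, hbS⟩⟩
          · exact Or.inr ⟨b, by rw [h, hav], Or.inr hbS⟩
        · by_cases haS : a ∈ S
          · exact Or.inl ⟨a, by rw [h]; exact Sym2.mem_mk_left a b,
              Finset.mem_erase.mpr ⟨hav, haS⟩⟩
          · exact Or.inr ⟨a, by rw [h, hbv, Sym2.eq_swap], Or.inr haS⟩
        · rcases hu with rfl | rfl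
          · exact Or.inl ⟨u, by rw [h]; exact Sym2.mem_mk_left u b,
              Finset.mem_erase.mpr ⟨hav, hm⟩⟩
          · exact Or.inl ⟨u, by rw [h]; exact Sym2.mem_mk_right a u,
              Finset.mem_erase.mpr ⟨hbv, hm⟩⟩

lemma keyB {V E : Type*} [Fintype V] [Fintype E] [DecidableEq V]
    (ends : E → Sym2 V) (f : V → ℕ) (hf : IsWeakParkingFunction ends f)
    (S : Finset V) :
    (∑ v ∈ S, f v ≤ kap ends S) ∧
      (∑ v ∈ S, f v < kap ends S → ∃ w ∈ S, ∀ T : Finset V, T.Nonempty → T ⊆ S →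
        ∃ v ∈ T, (if v = w then f v + 1 else f v) ≤ dhat ends T v) := by
  induction S using Finset.strongInduction with
  | _ S ih =>
    rcases S.eq_empty_or_nonempty with rfl | hS
    · refine ⟨by simp [kap_empty], by simp [kap_empty]⟩
    · obtain ⟨v, hvS, hfv⟩ := hf S hS
      obtain ⟨ih1, ih2⟩ := ih _ (Finset.erase_ssubset hvS)
      have hkap : kap ends (S.erase v) + dhat ends S v = kap ends S := kap_erase_add ends hvS
      have hsum : ∑ x ∈ S.erase v, f x + f v = ∑ x ∈ S, f x := Finset.sum_erase_add _ _ hvS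
      constructor
      · omega
      · intro hlt
        rcases lt_or_eq_of_le hfv with hstrict | heq
        · refine ⟨v, hvS, ?_⟩
          intro T hT hTS
          by_cases hvT : v ∈ T
          · refine ⟨v, hvT, ?_⟩
            rw [if_pos rfl]
            have := dhat_anti ends hTS v
            omega
          · obtain ⟨u, huT, hu⟩ := hf T hT
            refine ⟨u, huT, ?_⟩
            rw [if_neg (by rintro rfl; exact hvT huT)]
            exact hu
        · have hlt' : ∑ x ∈ S.erase v, f x < kap ends (S.erase v) := by omega
          obtain ⟨w, hw, hprop⟩ := ih2 hlt'
          refine ⟨w, Finset.mem_of_mem_erase hw, ?_⟩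
          intro T hT hTS
          by_cases hvT : v ∈ T
          · refine ⟨v, hvT, ?_⟩
            have hne : v ≠ w := by rintro rfl; exact (Finset.mem_erase.mp hw).1 rfl
            rw [if_neg hne, heq]
            exact dhat_anti ends hTS v
          · exact hprop T hT fun x hx =>
              Finset.mem_erase.mpr ⟨fun h => hvT (h ▸ hx), hTS hx⟩

/-- A weak parking function has total sum at most `|E|`, and it is maximal for
the pointwise order if and only if its total sum equals `|E|`. -/
theorem weakParkingFunction_sum_le_and_maximal_iff
    {V E : Type*} [Fintype V] [Fintype E] [DecidableEq V]
    (ends : E → Sym2 V) (f : V → ℕ)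
    (hf : IsWeakParkingFunction ends f) :
    (∑ v : V, f v ≤ Fintype.card E) ∧
      ((∀ g : V → ℕ, IsWeakParkingFunction ends g → (∀ v, f v ≤ g v) → g = f) ↔
        ∑ v : V, f v = Fintype.card E) := by
  obtain ⟨h1, h2⟩ := keyB ends f hf Finset.univ
  rw [kap_univ] at h1 h2
  refine ⟨h1, ?_, ?_⟩
  · intro hmax
    by_contra hne
    obtain ⟨w, -, hprop⟩ := h2 (lt_of_le_of_ne h1 hne)
    set g := fun v => if v = w then f v + 1 else f v with hg
    have hgpf : IsWeakParkingFunction ends g := by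
      intro T hT
      obtain ⟨v, hv, h⟩ := hprop T hT (Finset.subset_univ T)
      exact ⟨v, hv, h⟩
    have heq := hmax g hgpf (fun v => by by_cases h : v = w <;> simp [hg, h])
    have := congrFun heq w
    simp [hg] at this
  · intro hsum g hg hle
    have hg1 : ∑ v : V, g v ≤ Fintype.card E := by
      have := (keyB ends g hg Finset.univ).1
      rwa [kap_univ] at this
    funext v
    by_contra hne
    have hlt : ∑ v : V, f v < ∑ v : V, g v :=
      Finset.sum_lt_sum (fun i _ => hle i)
        ⟨v, Finset.mem_univ v, lt_of_le_of_ne (hle v) (Ne.symm hne)⟩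
    omega
end

section
/- Let G = (V, E, ends) be a multigraph and let f be a weak parking function of G. Then the vector (f(v))_{v∈V} is a partial score vector of G, i.e., there exists a partial orientation o of G whose score vector equals (f(v))_{v∈V}. -/
open Finset

/-!
Induction on `S ⊆ V`: build a partial orientation whose sources all lie in `S` and whose
scores agree with `f` on `S`. For nonempty `S` pick `v ∈ S` with `f v ≤ d̂_S(v)`, take an
orientation for `S ∖ {v}`, and orient `f v` of the edges counted by `d̂_S(v)` away from `v`.
The other endpoint of such an edge is `v` or lies outside `S`, so none of these edges was
oriented before, and re-orienting them changes no score except that of `v`.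
-/

section DhatEdges

variable {V E : Type*} [Fintype V] [Fintype E] [DecidableEq V]

def dhatEdges (ends : E → Sym2 V) (S : Finset V) (v : V) : Finset E :=
  univ.filter fun e : E => ∃ u : V, ends e = s(v, u) ∧ (u = v ∨ u ∉ S)

theorem card_dhatEdges (ends : E → Sym2 V) (S : Finset V) (v : V) :
    #(dhatEdges ends S v) = dhat ends S v := rfl

theorem mem_ends_of_mem_dhatEdges {ends : E → Sym2 V} {S : Finset V} {v : V}
    {e : E} (he : e ∈ dhatEdges ends S v) : v ∈ ends e := by
  obtain ⟨u, hu, -⟩ := (mem_filter.1 he).2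
  simp [hu]

theorem eq_of_mem_dhatEdges {ends : E → Sym2 V} {S : Finset V} {v w : V}
    {e : E} (he : e ∈ dhatEdges ends S v) (hw : w ∈ ends e) (hwS : w ∈ S) : w = v := by
  obtain ⟨u, hu, hu'⟩ := (mem_filter.1 he).2
  rw [hu, Sym2.mem_iff] at hw
  rcases hw with rfl | rfl
  · rfl
  · exact hu'.resolve_right (not_not.2 hwS)

end DhatEdges

section OrientAway

variable {V E : Type*} [DecidableEq E]

def orientAway (o : E → Option V) (C : Finset E) (v : V) : E → Option V :=
  fun e => if e ∈ C then some v else o e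

theorem eq_or_eq_some_of_orientAway_eq_some {o : E → Option V} {C : Finset E} {v w : V}
    {e : E} (h : orientAway o C v e = some w) : w = v ∨ o e = some w := by
  unfold orientAway at h
  split_ifs at h
  · exact .inl (Option.some_injective _ h).symm
  · exact .inr h

theorem IsPartialOrientation.orientAway {ends : E → Sym2 V} {o : E → Option V}
    {C : Finset E} {v : V} (ho : IsPartialOrientation ends o) (hC : ∀ e ∈ C, v ∈ ends e) :
    IsPartialOrientation ends (orientAway o C v) := by
  intro e w h
  by_cases he : e ∈ C
  · simp only [_root_.orientAway, he, if_true, Option.some.injEq] at h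
    exact h ▸ hC e he
  · simp only [_root_.orientAway, he, if_false] at h
    exact ho e w h

theorem scoreVector_orientAway_self [Fintype E] [DecidableEq V] {o : E → Option V}
    {C : Finset E} {v : V}
    (hv : ∀ e, o e ≠ some v) : scoreVector (orientAway o C v) v = #C := by
  unfold scoreVector
  congr 1
  ext e
  by_cases he : e ∈ C <;> simp [orientAway, he, hv e]

theorem scoreVector_orientAway_of_ne [Fintype E] [DecidableEq V] {o : E → Option V}
    {C : Finset E} {v w : V} (hwv : w ≠ v) (hC : ∀ e ∈ C, o e ≠ some w) :
    scoreVector (orientAway o C v) w = scoreVector o w := by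
  unfold scoreVector
  congr 1
  refine filter_congr fun e _ => ?_
  by_cases he : e ∈ C <;> simp [orientAway, he, hC e, hwv.symm]

end OrientAway

theorem exists_partialOrientation_of_isWeakParkingFunction
    {V E : Type*} [Fintype V] [Fintype E] [DecidableEq V] {ends : E → Sym2 V} {f : V → ℕ}
    (hf : IsWeakParkingFunction ends f) (S : Finset V) :
    ∃ o : E → Option V, IsPartialOrientation ends o ∧
      (∀ e w, o e = some w → w ∈ S) ∧ ∀ v ∈ S, scoreVector o v = f v := by
  classical
  induction S using Finset.strongInduction with
  | H S ih =>
    rcases S.eq_empty_or_nonempty with rfl | hS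
    · exact ⟨fun _ => none, by simp [IsPartialOrientation], by simp, by simp⟩
    obtain ⟨v, hvS, hfv⟩ := hf S hS
    obtain ⟨o, ho, hoS, hof⟩ := ih (S.erase v) (erase_ssubset hvS)
    obtain ⟨C, hC, hCcard⟩ :=
      exists_subset_card_eq (hfv.trans_eq (card_dhatEdges ends S v).symm)
    have hCo : ∀ e ∈ C, ∀ w ∈ S, o e ≠ some w := fun e he w hwS hew =>
      (mem_erase.1 (hoS e w hew)).1 (eq_of_mem_dhatEdges (hC he) (ho e w hew) hwS)
    refine ⟨orientAway o C v,
      ho.orientAway fun e he => mem_ends_of_mem_dhatEdges (hC he), ?_, fun w hwS => ?_⟩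
    · intro e w h
      rcases eq_or_eq_some_of_orientAway_eq_some h with rfl | h
      · exact hvS
      · exact mem_of_mem_erase (hoS e w h)
    by_cases hwv : w = v
    · subst hwv
      rw [scoreVector_orientAway_self fun e hew => by simpa using hoS e w hew, hCcard]
    · rw [scoreVector_orientAway_of_ne hwv fun e he => hCo e he w hwS]
      exact hof w (mem_erase.2 ⟨hwv, hwS⟩)

/-- The vector of values of a weak parking function is a partial score vector. -/
theorem weakParkingFunction_isPartialScoreVector
    {V E : Type*} [Fintype V] [Fintype E] [DecidableEq V]
    (ends : E → Sym2 V) (f : V → ℕ)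
    (hf : IsWeakParkingFunction ends f) :
    ∃ o : E → Option V, IsPartialOrientation ends o ∧ scoreVector o = f := by
  obtain ⟨o, ho, -, hof⟩ := exists_partialOrientation_of_isWeakParkingFunction hf univ
  exact ⟨o, ho, funext fun v => hof v (mem_univ v)⟩
end

section
/- Let G = (V, E, ends) be a multigraph. The score vector polytope P_G equals the convex hull in ℝ^V of the set of vectors {(f(v))_{v∈V} : f a weak parking function of G}. -/
set_option linter.unusedSectionVars false

open Finset

section Aux
variable {V E : Type*} [Fintype V] [Fintype E] [DecidableEq V] (ends : E → Sym2 V)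

lemma kappa_erase_add_dhat {S : Finset V} {v : V} (hv : v ∈ S) :
    multigraphKappa ends (S.erase v) + dhat ends S v ≤ multigraphKappa ends S := by
  classical
  set F1 := univ.filter fun e : E => ∃ w ∈ S.erase v, w ∈ ends e with hF1
  set F2 := univ.filter fun e : E => ∃ u : V, ends e = s(v, u) ∧ (u = v ∨ u ∉ S) with hF2
  have hdisj : Disjoint F1 F2 := by
    rw [Finset.disjoint_left]
    intro e h1 h2
    simp only [hF1, hF2, mem_filter, mem_univ, true_and] at h1 h2
    obtain ⟨a, ha, hae⟩ := h1
    obtain ⟨u, hu, huv⟩ := h2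
    rw [hu, Sym2.mem_iff] at hae
    rcases hae with rfl | rfl
    · exact (Finset.ne_of_mem_erase ha) rfl
    · rcases huv with rfl | h
      · exact (Finset.ne_of_mem_erase ha) rfl
      · exact h (Finset.mem_of_mem_erase ha)
  have hsub : F1 ∪ F2 ⊆ univ.filter fun e : E => ∃ a ∈ S, a ∈ ends e := by
    intro e he
    rcases Finset.mem_union.1 he with h | h
    · simp only [hF1, mem_filter, mem_univ, true_and] at h ⊢
      obtain ⟨a, ha, hae⟩ := h
      exact ⟨a, Finset.mem_of_mem_erase ha, hae⟩
    · simp only [hF2, mem_filter, mem_univ, true_and] at h ⊢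
      obtain ⟨u, hu, _⟩ := h
      exact ⟨v, hv, by rw [hu]; exact Sym2.mem_mk_left _ _⟩
  calc multigraphKappa ends (S.erase v) + dhat ends S v = (F1 ∪ F2).card :=
        (Finset.card_union_of_disjoint hdisj).symm
    _ ≤ _ := Finset.card_le_card hsub

lemma weakParking_sum_le {f : V → ℕ} (hf : IsWeakParkingFunction ends f)
    (S : Finset V) : ∑ v ∈ S, f v ≤ multigraphKappa ends S := by
  induction S using Finset.strongInduction with
  | _ S ih =>
    rcases S.eq_empty_or_nonempty with rfl | hS
    · simp
    · obtain ⟨v, hv, hfv⟩ := hf S hS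
      rw [← Finset.add_sum_erase _ _ hv]
      calc f v + ∑ u ∈ S.erase v, f u ≤ dhat ends S v + multigraphKappa ends (S.erase v) :=
            Nat.add_le_add hfv (ih _ (Finset.erase_ssubset hv))
        _ ≤ _ := by rw [Nat.add_comm]; exact kappa_erase_add_dhat ends hv

variable {V E : Type*} [Fintype V] [Fintype E] [DecidableEq V] (ends : E → Sym2 V)

lemma kappa_mono' {S T : Finset V} (h : S ⊆ T) :
    multigraphKappa ends S ≤ multigraphKappa ends T := by
  apply Finset.card_le_card
  intro e he
  simp only [mem_filter, mem_univ, true_and] at he ⊢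
  obtain ⟨v, hv, hve⟩ := he
  exact ⟨v, h hv, hve⟩

lemma abel_aux' {p X K : ℕ → ℝ} (hp : ∀ m, p (m + 1) ≤ p m)
    (hX0 : X 0 = 0) (hK0 : K 0 = 0) (hXK : ∀ m, X m ≤ K m) :
    ∀ m, ∑ j ∈ Finset.range m, p j * (X (j + 1) - X j)
      ≤ ∑ j ∈ Finset.range m, p j * (K (j + 1) - K j) - p m * (K m - X m) := by
  intro m
  induction m with
  | zero => simp [hX0, hK0]
  | succ m ih =>
    rw [Finset.sum_range_succ, Finset.sum_range_succ]
    have h1 := hp m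
    have h2 := hXK (m + 1)
    have h3 : p (m + 1) * (K (m + 1) - X (m + 1)) ≤ p m * (K (m + 1) - X (m + 1)) :=
      mul_le_mul_of_nonneg_right h1 (sub_nonneg.2 h2)
    linarith

lemma kappa_diff_le_dhat {A S : Finset V} {v : V}
    (hcover : ∀ u ∈ S, u ≠ v → u ∈ A) :
    multigraphKappa ends (insert v A) - multigraphKappa ends A ≤ dhat ends S v := by
  classical
  have hFsub : (univ.filter fun e : E => ∃ u ∈ A, u ∈ ends e) ⊆
      (univ.filter fun e : E => ∃ u ∈ insert v A, u ∈ ends e) := by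
    intro eg heg
    simp only [mem_filter, mem_univ, true_and] at heg ⊢
    obtain ⟨u, hu, hue⟩ := heg
    exact ⟨u, Finset.mem_insert_of_mem hu, hue⟩
  have hcard : multigraphKappa ends (insert v A) - multigraphKappa ends A =
      ((univ.filter fun e : E => ∃ u ∈ insert v A, u ∈ ends e) \
        (univ.filter fun e : E => ∃ u ∈ A, u ∈ ends e)).card := by
    rw [Finset.card_sdiff_of_subset hFsub]; rfl
  rw [hcard]
  apply Finset.card_le_card
  intro eg heg
  rw [Finset.mem_sdiff] at heg
  obtain ⟨h1, h2⟩ := heg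
  simp only [mem_filter, mem_univ, true_and, dhat] at h1 h2 ⊢
  push_neg at h2
  obtain ⟨a, haA, hae⟩ := h1
  have hav : a = v := by
    rcases Finset.mem_insert.1 haA with h | h
    · exact h
    · exact absurd hae (h2 a h)
  subst hav
  obtain ⟨u, hu⟩ := Sym2.mem_iff_exists.1 hae
  refine ⟨u, hu, ?_⟩
  by_contra hcon
  push_neg at hcon
  obtain ⟨huv, huS⟩ := hcon
  exact h2 u (hcover u huS huv) (by rw [hu]; exact Sym2.mem_mk_right _ _)

lemma exists_greedy_weakParking (w : V → ℝ) :
    ∃ g : V → ℕ, IsWeakParkingFunction ends g ∧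
      ∀ x ∈ scorePolytope ends, ∑ v, w v * x v ≤ ∑ v, w v * (g v : ℝ) := by
  classical
  set n := Fintype.card V with hn
  set e : Fin n ≃ V := (Fintype.equivFin V).symm with he
  set τ := Tuple.sort (fun i => -w (e i)) with hτ
  set σ : Fin n ≃ V := τ.trans e with hσdef
  have hmono := Tuple.monotone_sort (fun i => -w (e i))
  have hanti : Antitone fun i : Fin n => w (σ i) := by
    intro i j hij
    have h := hmono hij
    simp only [Function.comp_apply] at h
    simpa [hσdef] using neg_le_neg_iff.mp h
  set A : ℕ → Finset V := fun m => univ.filter (fun v => (σ.symm v : ℕ) < m) with hA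
  have hA0 : A 0 = ∅ := by simp [hA]
  have hAmono : ∀ m, A m ⊆ A (m + 1) := by
    intro m v hv
    simp only [hA, mem_filter, mem_univ, true_and] at hv ⊢
    omega
  have hAsucc : ∀ j : Fin n, A ((j : ℕ) + 1) = insert (σ j) (A j) := by
    intro j; ext v
    simp only [hA, mem_filter, mem_univ, true_and, mem_insert]
    constructor
    · intro h
      rcases Nat.lt_succ_iff_lt_or_eq.1 h with h | h
      · exact Or.inr h
      · left
        have h2 : σ.symm v = j := Fin.ext h
        rw [← h2, Equiv.apply_symm_apply]
    · rintro (rfl | h)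
      · simp
      · exact Nat.lt_succ_of_lt h
  have hAnotmem : ∀ j : Fin n, σ j ∉ A j := by
    intro j; simp [hA]
  set K : ℕ → ℕ := fun m => multigraphKappa ends (A m) with hK
  set g : V → ℕ := fun v => if 0 < w v then K ((σ.symm v : ℕ) + 1) - K (σ.symm v) else 0 with hg
  have hgpark : IsWeakParkingFunction ends g := by
    intro S hS
    by_cases hpos : ∀ v ∈ S, 0 < w v
    · set T := S.image (fun v => (σ.symm v : ℕ)) with hT
      have hTne : T.Nonempty := hS.image _
      set jn := T.max' hTne with hjn
      obtain ⟨v0, hv0S, hv0⟩ := Finset.mem_image.1 (T.max'_mem hTne)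
      rw [← hjn] at hv0
      have hjlt : jn < n := by rw [← hv0]; exact (σ.symm v0).isLt
      set j : Fin n := ⟨jn, hjlt⟩ with hj
      have hσj : σ j = v0 := by
        have h2 : j = σ.symm v0 := Fin.ext (by simp [hj, hv0])
        rw [h2, Equiv.apply_symm_apply]
      refine ⟨v0, hv0S, ?_⟩
      have hgv0 : g v0 = K (jn + 1) - K jn := by
        rw [hg]
        simp only [if_pos (hpos v0 hv0S), hv0]
      rw [hgv0]
      have hins : A (jn + 1) = insert v0 (A jn) := by
        have h3 := hAsucc j
        rw [hσj] at h3
        exact h3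
      have hcover : ∀ u ∈ S, u ≠ v0 → u ∈ A jn := by
        intro u huS huv
        have hle : (σ.symm u : ℕ) ≤ jn := T.le_max' _ (Finset.mem_image_of_mem _ huS)
        have hlt : (σ.symm u : ℕ) < jn := by
          rcases lt_or_eq_of_le hle with h | h
          · exact h
          · exfalso
            apply huv
            have h4 : σ.symm u = j := Fin.ext h
            rw [← hσj, ← h4, Equiv.apply_symm_apply]
        simp [hA, hlt]
      have := kappa_diff_le_dhat ends hcover
      rw [hK]
      simp only [hins]
      exact this
    · push_neg at hpos
      obtain ⟨v, hvS, hw⟩ := hpos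
      refine ⟨v, hvS, ?_⟩
      have : g v = 0 := by rw [hg]; simp only [if_neg (not_lt.2 hw)]
      rw [this]; exact Nat.zero_le _
  -- Part 2: the greedy bound
  have hbound : ∀ x : V → ℝ, (∀ v : V, 0 ≤ x v) →
      (∀ S : Finset V, ∑ v ∈ S, x v ≤ (multigraphKappa ends S : ℝ)) →
      ∑ v, w v * x v ≤ ∑ v, w v * (g v : ℝ) := by
    intro x hx0 hxS
    set p : ℕ → ℝ := fun m => if h : m < n then max (w (σ ⟨m, h⟩)) 0 else 0 with hp
    have hp0 : ∀ m, 0 ≤ p m := by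
      intro m
      rw [hp]
      dsimp only
      split
      · exact le_max_right _ _
      · exact le_refl 0
    have hpanti : ∀ m, p (m + 1) ≤ p m := by
      intro m
      by_cases h1 : m + 1 < n
      · have h0 : m < n := Nat.lt_of_succ_lt h1
        rw [hp]
        dsimp only
        rw [dif_pos h1, dif_pos h0]
        exact max_le_max (hanti (by exact Fin.mk_le_mk.2 (Nat.le_succ m))) le_rfl
      · rw [hp]
        dsimp only
        rw [dif_neg h1]
        exact hp0 m
    set X : ℕ → ℝ := fun m => ∑ v ∈ A m, x v with hX
    have hXK : ∀ m, X m ≤ ((K m : ℕ) : ℝ) := fun m => hxS (A m)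
    have hX0 : X 0 = 0 := by simp [hX, hA0]
    have hK0 : ((K 0 : ℕ) : ℝ) = 0 := by
      have : K 0 = 0 := by
        rw [hK]
        simp [hA0, multigraphKappa]
      rw [this]; norm_num
    have habel := abel_aux' hpanti hX0 hK0 hXK n
    have hpn : p n = 0 := by rw [hp]; exact dif_neg (lt_irrefl n)
    rw [hpn] at habel
    have hKmono : ∀ m, (K m : ℝ) ≤ (K (m + 1) : ℝ) := by
      intro m
      exact_mod_cast kappa_mono' ends (hAmono m)
    -- identify LHS
    have hLHS : ∑ j ∈ Finset.range n, p j * (X (j + 1) - X j) = ∑ v, max (w v) 0 * x v := by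
      rw [← Fin.sum_univ_eq_sum_range]
      rw [← Equiv.sum_comp σ (fun v => max (w v) 0 * x v)]
      apply Finset.sum_congr rfl
      intro i _
      have h1 : p (i : ℕ) = max (w (σ i)) 0 := by
        rw [hp]; dsimp only; rw [dif_pos i.isLt]
      have h2 : X ((i : ℕ) + 1) - X (i : ℕ) = x (σ i) := by
        rw [hX]
        dsimp only
        rw [hAsucc i, Finset.sum_insert (hAnotmem i)]
        ring
      rw [h1, h2]
    have hRHS : ∑ j ∈ Finset.range n, p j * (((K (j + 1) : ℕ) : ℝ) - ((K j : ℕ) : ℝ))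
        = ∑ v, max (w v) 0 * (g v : ℝ) := by
      rw [← Fin.sum_univ_eq_sum_range]
      rw [← Equiv.sum_comp σ (fun v => max (w v) 0 * (g v : ℝ))]
      apply Finset.sum_congr rfl
      intro i _
      have h1 : p (i : ℕ) = max (w (σ i)) 0 := by
        rw [hp]; dsimp only; rw [dif_pos i.isLt]
      rw [h1]
      have hgσ : g (σ i) = if 0 < w (σ i) then K ((i : ℕ) + 1) - K (i : ℕ) else 0 := by
        rw [hg]; dsimp only; rw [Equiv.symm_apply_apply]
      by_cases hw : 0 < w (σ i)
      · rw [hgσ, if_pos hw, max_eq_left hw.le]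
        congr 1
        have hle : K (i : ℕ) ≤ K ((i : ℕ) + 1) := by
          exact_mod_cast hKmono (i : ℕ)
        push_cast [Nat.cast_sub hle]
        ring
      · rw [hgσ, if_neg hw, max_eq_right (not_lt.1 hw)]
        norm_num
    have hstep1 : ∑ v, w v * x v ≤ ∑ v, max (w v) 0 * x v := by
      apply Finset.sum_le_sum
      intro v _
      exact mul_le_mul_of_nonneg_right (le_max_left _ _) (hx0 v)
    have hstep2 : ∑ v, max (w v) 0 * (g v : ℝ) = ∑ v, w v * (g v : ℝ) := by
      apply Finset.sum_congr rfl
      intro v _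
      by_cases hw : 0 < w v
      · rw [max_eq_left hw.le]
      · have : g v = 0 := by rw [hg]; simp only [if_neg hw]
        rw [this]
        norm_num
    calc ∑ v, w v * x v ≤ ∑ v, max (w v) 0 * x v := hstep1
      _ = ∑ j ∈ Finset.range n, p j * (X (j + 1) - X j) := hLHS.symm
      _ ≤ ∑ j ∈ Finset.range n, p j * (((K (j + 1) : ℕ) : ℝ) - ((K j : ℕ) : ℝ)) := by
          linarith [habel]
      _ = ∑ v, max (w v) 0 * (g v : ℝ) := hRHS
      _ = ∑ v, w v * (g v : ℝ) := hstep2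
  exact ⟨g, hgpark, fun x hx => hbound x hx.1 hx.2⟩

lemma weakParkingVectors_subset_scorePolytope :
    {x : V → ℝ | ∃ f : V → ℕ, IsWeakParkingFunction ends f ∧ x = fun v => (f v : ℝ)}
      ⊆ scorePolytope ends := by
  rintro x ⟨f, hf, rfl⟩
  refine ⟨fun v => Nat.cast_nonneg _, fun S => ?_⟩
  calc ∑ v ∈ S, ((f v : ℝ)) = ((∑ v ∈ S, f v : ℕ) : ℝ) := by push_cast; rfl
    _ ≤ _ := Nat.cast_le.2 (weakParking_sum_le ends hf S)

lemma convex_scorePolytope : Convex ℝ (scorePolytope ends) := by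
  intro x hx y hy a b ha hb hab
  refine ⟨fun v => ?_, fun S => ?_⟩
  · have h : (a • x + b • y) v = a * x v + b * y v := rfl
    rw [h]
    exact add_nonneg (mul_nonneg ha (hx.1 v)) (mul_nonneg hb (hy.1 v))
  · have h : ∑ v ∈ S, (a • x + b • y) v = a * ∑ v ∈ S, x v + b * ∑ v ∈ S, y v := by
      rw [Finset.mul_sum, Finset.mul_sum, ← Finset.sum_add_distrib]
      apply Finset.sum_congr rfl
      intro v _
      rfl
    rw [h]
    calc a * ∑ v ∈ S, x v + b * ∑ v ∈ S, y v
        ≤ a * (multigraphKappa ends S : ℝ) + b * (multigraphKappa ends S : ℝ) :=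
          add_le_add (mul_le_mul_of_nonneg_left (hx.2 S) ha)
            (mul_le_mul_of_nonneg_left (hy.2 S) hb)
      _ = (multigraphKappa ends S : ℝ) := by rw [← add_mul, hab, one_mul]

end Aux

/-- The score vector polytope is the convex hull of the set of vectors of weak
parking functions. -/
theorem scorePolytope_eq_convexHull_weakParkingVectors
    {V E : Type*} [Fintype V] [Fintype E] [DecidableEq V]
    (ends : E → Sym2 V) :
    scorePolytope ends =
      convexHull ℝ {x : V → ℝ | ∃ f : V → ℕ,
        IsWeakParkingFunction ends f ∧ x = fun v => (f v : ℝ)} := by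
  classical
  set D : Set (V → ℝ) :=
    {x : V → ℝ | ∃ f : V → ℕ, IsWeakParkingFunction ends f ∧ x = fun v => (f v : ℝ)} with hD
  apply Set.Subset.antisymm
  · intro x hx
    by_contra hxD
    have hDfin : D.Finite := by
      have hM : D ⊆ (fun f : V → ℕ => fun v => (f v : ℝ)) ''
          {f : V → ℕ | ∀ v, f v ≤ Fintype.card E} := by
        rintro y ⟨f, hf, rfl⟩
        refine ⟨f, fun v => ?_, rfl⟩
        obtain ⟨u, hu, hfu⟩ := hf {v} ⟨v, Finset.mem_singleton_self v⟩
        rw [Finset.mem_singleton] at hu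
        subst hu
        calc f u ≤ dhat ends {u} u := hfu
          _ ≤ Fintype.card E :=
            le_trans (Finset.card_filter_le _ _) (le_of_eq Finset.card_univ)
      refine Set.Finite.subset (Set.Finite.image _ ?_) hM
      have heq : {f : V → ℕ | ∀ v, f v ≤ Fintype.card E}
          = Set.pi Set.univ (fun _ : V => Set.Iic (Fintype.card E)) := by
        ext f
        simp [Set.mem_pi, Pi.le_def]
      rw [heq]
      exact Set.Finite.pi fun _ => Set.finite_Iic _
    obtain ⟨φ, u, hu1, hu2⟩ := geometric_hahn_banach_closed_point
      (convex_convexHull ℝ D) (hDfin.isClosed_convexHull (𝕜 := ℝ)) hxD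
    set w : V → ℝ := fun v => φ (Pi.single v 1) with hw
    have hφ : ∀ y : V → ℝ, φ y = ∑ v, w v * y v := by
      intro y
      have hy : ∑ v, y v • (Pi.single v (1 : ℝ) : V → ℝ) = y := by
        have h1 : ∀ v : V, y v • (Pi.single v (1 : ℝ) : V → ℝ) = Pi.single v (y v) := by
          intro v
          rw [← Pi.single_smul, smul_eq_mul, mul_one]
        rw [Finset.sum_congr rfl fun v _ => h1 v, Finset.univ_sum_single]
      calc φ y = φ (∑ v, y v • (Pi.single v (1 : ℝ) : V → ℝ)) := by rw [hy]
        _ = ∑ v, y v • φ (Pi.single v (1 : ℝ)) := by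
            rw [map_sum]
            exact Finset.sum_congr rfl fun v _ => φ.map_smul _ _
        _ = ∑ v, w v * y v := by
            apply Finset.sum_congr rfl
            intro v _
            rw [hw, smul_eq_mul, mul_comm]
    obtain ⟨g, hgpark, hgle⟩ := exists_greedy_weakParking ends w
    have hgD : (fun v => (g v : ℝ)) ∈ convexHull ℝ D :=
      subset_convexHull ℝ D ⟨g, hgpark, rfl⟩
    have h1 : φ x ≤ φ (fun v => (g v : ℝ)) := by
      rw [hφ, hφ]
      exact hgle x hx
    linarith [hu1 _ hgD, hu2]
  · exact convexHull_min (weakParkingVectors_subset_scorePolytope ends)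
      (convex_scorePolytope ends)
end

section
/- Fix an integer n ≥ 4 and write κ_I := |I|(|I|−1)/2 + |I|·(n−|I|) for nonempty I ⊆ Fin n. Let J be a nonempty subset of Fin n not containing the last element n−1, and let ℓ = |J| (so 1 ≤ ℓ ≤ n−1). Then the number of vectors b : Fin n → ℕ satisfying: (a) ∑_i b_i = n(n−1)/2 − 1; (b) ∑_{i∈I} b_i + 1 ≤ κ_I for every nonempty I ⊆ Fin n; (c) ∑_{j∈J} b_j + 1 = κ_J; and (d) ∑_{j∈J'} b_j + 1 < κ_{J'} for every J' with J ⊊ J' ⊆ Fin n ∖ {n−1}, equals ℓ^{ℓ−2} · (n−ℓ)^{(n−ℓ)−2}, where the exponents use truncated natural subtraction (so each factor equals 1 when ℓ ≤ 2, respectively n−ℓ ≤ 2). -/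
open Finset

/-- The degree `κ_I` of a nonempty subset `I` of vertices of the complete graph
`K_n`: the number of edges of `K_n` incident to `I`. -/
def kappaComplete (n : ℕ) (I : Finset (Fin n)) : ℕ :=
  I.card * (I.card - 1) / 2 + I.card * (n - I.card)

/-!
Write `ℓ = |J|` and `m = n - ℓ`. Restricting `b ∈ Z_J` to `J`, lowered by `m` (and raised by one
at a root `r ∈ J`), and to `Jᶜ` identifies `Z_J` with a product of two *half-open permutohedra*:
the vectors `d` on a vertex set `S` with `∑_S d = C(|S|, 2)` and `∑_K d ≥ C(|K|, 2)` for `K ⊆ S`,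
strictly when the root lies in `K ⊊ S`. The inequalities of `Z_J` split this way because `κ` is
modular up to a cross term: `κ_{A ∪ K} + |A| |K| = κ_A + κ_K` for disjoint `A` and `K`.

With `m = |S|`, the half-open permutohedron is a fundamental domain for the lattice spanned by the
vectors `m 1_K - |K| 1_S`: it meets every class of vectors with prescribed residues mod `m` off the
root, up to a common shift, exactly once. There are `m ^ (m - 1)` residue vectors and `m` shifts,
hence `m ^ (m - 2)` points. A point of a class is found by minimising `∑ y_x² - y_r` over it, the
term `- y_r` being what forces the strict inequalities at the root. It is unique because for two
points differing by a shift `t ≠ 0`, comparing partial sums shows that fewer than `t` of the `m - 1`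
off-root coordinates wrap around mod `m` and fewer than `m - t` do not.
-/

theorem choose_two_add (a b : ℕ) : (a + b).choose 2 = a.choose 2 + b.choose 2 + a * b := by
  induction b with
  | zero => simp
  | succ b ih =>
    rw [← add_assoc, Nat.choose_succ_succ', Nat.choose_succ_succ', ih]
    simp only [Nat.choose_one_right]
    ring

theorem two_mul_choose_two_cast (n : ℕ) : 2 * (n.choose 2 : ℤ) = n * (n - 1) := by
  induction n with
  | zero => simp
  | succ n ih =>
    rw [Nat.choose_succ_succ', Nat.choose_one_right]
    push_cast
    linear_combination ih

def edgesMeeting (N k : ℕ) : ℕ := k.choose 2 + k * (N - k)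

theorem edgesMeeting_self (N : ℕ) : edgesMeeting N N = N.choose 2 := by
  simp [edgesMeeting]

theorem choose_two_eq_add_edgesMeeting {s k : ℕ} (h : k ≤ s) :
    s.choose 2 = (s - k).choose 2 + edgesMeeting s k := by
  obtain ⟨t, rfl⟩ := Nat.exists_eq_add_of_le h
  rw [edgesMeeting, Nat.add_sub_cancel_left, add_comm k t, choose_two_add]
  ring

theorem edgesMeeting_add_right {ℓ k : ℕ} (m : ℕ) (h : k ≤ ℓ) :
    edgesMeeting (ℓ + m) k = edgesMeeting ℓ k + k * m := by
  unfold edgesMeeting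
  rw [Nat.sub_add_comm h]
  ring

theorem edgesMeeting_add_add_mul {N a k : ℕ} (h : a + k ≤ N) :
    edgesMeeting N (a + k) + a * k = edgesMeeting N a + edgesMeeting N k := by
  obtain ⟨s, rfl⟩ := Nat.exists_eq_add_of_le h
  unfold edgesMeeting
  rw [show a + k + s - a = k + s by omega, show a + k + s - k = a + s by omega,
    Nat.add_sub_cancel_left, choose_two_add]
  ring

theorem edgesMeeting_add_add_choose_two (ℓ k j : ℕ) :
    edgesMeeting (ℓ + (k + j)) (ℓ + j) + k.choose 2
      = edgesMeeting (ℓ + (k + j)) ℓ + (k + j).choose 2 := by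
  unfold edgesMeeting
  rw [show ℓ + (k + j) - (ℓ + j) = k by omega, Nat.add_sub_cancel_left, choose_two_add,
    choose_two_add]
  ring

theorem add_le_edgesMeeting_add {N ℓ a k x y : ℕ} (hak : a + k ≤ N) (ha : a ≤ ℓ)
    (hx : x ≤ edgesMeeting N a) (hy : y + k * ℓ ≤ edgesMeeting N k) :
    x + y ≤ edgesMeeting N (a + k) := by
  have := edgesMeeting_add_add_mul hak
  have : k * a ≤ k * ℓ := Nat.mul_le_mul_left k ha
  nlinarith

theorem eq_add_or_add_eq_add_of_natCast_eq {m a b t : ℕ} (ha : a < m) (hb : b < m) (ht : t < m)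
    (h : (a : ZMod m) = b + t) : a = b + t ∨ a + m = b + t := by
  rw [← Nat.cast_add, ZMod.natCast_eq_natCast_iff', Nat.mod_eq_of_lt ha] at h
  rcases lt_or_ge (b + t) m with hbt | hbt
  · left
    rwa [Nat.mod_eq_of_lt hbt] at h
  · right
    rw [Nat.mod_eq_sub_mod hbt, Nat.mod_eq_of_lt (by omega)] at h
    omega

variable {α : Type*}

/-- The lattice points of the permutohedron on the coordinates `S` whose vertices are the
permutations of `(|S| - 1, …, 1, 0)`, minus its facets `∑_K d = C(|K|, 2)` with `r ∈ K`. -/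

structure InHalfOpenPermutohedron (S : Finset α) (r : α) (d : α → ℕ) : Prop where
  eq_zero_of_notMem : ∀ x ∉ S, d x = 0
  sum_eq : ∑ x ∈ S, d x = (#S).choose 2
  choose_two_le_sum : ∀ K ⊆ S, (#K).choose 2 ≤ ∑ x ∈ K, d x
  choose_two_lt_sum : ∀ K ⊆ S, r ∈ K → K ≠ S → (#K).choose 2 < ∑ x ∈ K, d x

section Uniqueness

variable [DecidableEq α]

namespace InHalfOpenPermutohedron

variable {S K W : Finset α} {r : α} {d d' : α → ℕ}

theorem sum_add_choose_two_sdiff (hd : InHalfOpenPermutohedron S r d) (hK : K ⊆ S) :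
    ∑ x ∈ K, d x + ∑ x ∈ S \ K, d x = (#(S \ K)).choose 2 + edgesMeeting #S #K := by
  rw [add_comm, sum_sdiff hK, hd.sum_eq, card_sdiff_of_subset hK,
    ← choose_two_eq_add_edgesMeeting (card_le_card hK)]

theorem sum_le_edgesMeeting (hd : InHalfOpenPermutohedron S r d) (hK : K ⊆ S) :
    ∑ x ∈ K, d x ≤ edgesMeeting #S #K := by
  have := hd.sum_add_choose_two_sdiff hK
  have := hd.choose_two_le_sum (S \ K) sdiff_subset
  omega

theorem sum_lt_edgesMeeting (hd : InHalfOpenPermutohedron S r d) (hK : K ⊆ S) (hr : r ∈ S)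
    (hrK : r ∉ K) (hK₀ : K.Nonempty) : ∑ x ∈ K, d x < edgesMeeting #S #K := by
  have := hd.sum_add_choose_two_sdiff hK
  have := hd.choose_two_lt_sum (S \ K) sdiff_subset (mem_sdiff.2 ⟨hr, hrK⟩)
    (sdiff_ssubset hK hK₀).ne
  omega

theorem add_two_le_card (hd : InHalfOpenPermutohedron S r d) (hr : r ∈ S) {i : α} (hi : i ∈ S)
    (hir : i ≠ r) : d i + 2 ≤ #S := by
  have := hd.sum_lt_edgesMeeting (singleton_subset_iff.2 hi) hr (by simpa using hir.symm)
    (singleton_nonempty i)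
  simp only [sum_singleton, edgesMeeting, card_singleton, Nat.choose_succ_self, zero_add,
    one_mul] at this
  have := card_pos.2 ⟨i, hi⟩
  omega

theorem card_lt_of_add_card_eq_add (hd : InHalfOpenPermutohedron S r d)
    (hd' : InHalfOpenPermutohedron S r d') (hr : r ∈ S) (hW : W ⊆ S.erase r) {t : ℕ}
    (ht : 0 < t) (h : ∀ i ∈ W, d i + #S = d' i + t) : #W < t := by
  obtain rfl | hW₀ := W.eq_empty_or_nonempty
  · simpa using ht
  have hWS : W ⊆ S := hW.trans (erase_subset r S)
  have hlow := hd.choose_two_le_sum W hWS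
  have hup := hd'.sum_lt_edgesMeeting hWS hr (fun hrW => by simpa using hW hrW) hW₀
  have hsum : ∑ i ∈ W, d i + #W * #S = ∑ i ∈ W, d' i + #W * t := by
    simpa [sum_add_distrib, mul_comm] using sum_congr rfl h
  have hcard := card_le_card hWS
  have hsplit : #W * #S = #W * (#S - #W) + #W * #W := by
    rw [← mul_add, Nat.sub_add_cancel hcard]
  unfold edgesMeeting at hup
  exact Nat.lt_of_mul_lt_mul_left (a := #W) (by omega)


theorem eq_of_eqOn_erase (hd : InHalfOpenPermutohedron S r d)
    (hd' : InHalfOpenPermutohedron S r d') (hr : r ∈ S) (h : ∀ i ∈ S.erase r, d i = d' i) :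
    d = d' := by
  have hroot : d r = d' r := by
    have := hd.sum_eq.trans hd'.sum_eq.symm
    rw [← add_sum_erase S d hr, ← add_sum_erase S d' hr, sum_congr rfl h] at this
    exact Nat.add_right_cancel this
  funext x
  by_cases hxS : x ∈ S
  · obtain rfl | hxr := eq_or_ne x r
    · exact hroot
    · exact h x (mem_erase.2 ⟨hxr, hxS⟩)
  · rw [hd.eq_zero_of_notMem x hxS, hd'.eq_zero_of_notMem x hxS]

theorem shift_eq_zero (hd : InHalfOpenPermutohedron S r d) (hd' : InHalfOpenPermutohedron S r d')
    (hr : r ∈ S) {t : ℕ} (ht : t < #S) (h : ∀ i ∈ S.erase r, (d' i : ZMod #S) = d i + t) :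
    t = 0 := by
  by_contra ht₀
  have hwrap : ∀ i ∈ S.erase r, d' i = d i + t ∨ d' i + #S = d i + t := fun i hi =>
    have ⟨hir, hiS⟩ := mem_erase.1 hi
    eq_add_or_add_eq_add_of_natCast_eq (by linarith [hd'.add_two_le_card hr hiS hir])
      (by linarith [hd.add_two_le_card hr hiS hir]) ht (h i hi)
  set W := (S.erase r).filter fun i => d' i + #S = d i + t
  have hW : #W < t :=
    hd'.card_lt_of_add_card_eq_add hd hr (filter_subset _ _) (by omega) fun i hi =>
      (mem_filter.1 hi).2
  have hW' : #(S.erase r \ W) < #S - t := by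
    refine hd.card_lt_of_add_card_eq_add hd' hr sdiff_subset (by omega) fun i hi => ?_
    obtain ⟨hi, hiW⟩ := mem_sdiff.1 hi
    have := (hwrap i hi).resolve_right fun hwr => hiW (mem_filter.2 ⟨hi, hwr⟩)
    omega
  have hcard : #(S.erase r \ W) + #W = #S - 1 := by
    rw [card_sdiff_add_card_eq_card (filter_subset _ _), card_erase_of_mem hr]
  omega

theorem eq_and_eq_of_natCast_add_eq (hd : InHalfOpenPermutohedron S r d)
    (hd' : InHalfOpenPermutohedron S r d') (hr : r ∈ S) {j j' : ZMod #S}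
    (h : ∀ i ∈ S.erase r, (d i : ZMod #S) + j = d' i + j') : d = d' ∧ j = j' := by
  have : NeZero #S := ⟨card_ne_zero_of_mem hr⟩
  have hshift : ∀ i ∈ S.erase r, (d' i : ZMod #S) = d i + (j - j').val := fun i hi => by
    rw [ZMod.natCast_zmod_val]
    linear_combination -h i hi
  have ht := hd.shift_eq_zero hd' hr (ZMod.val_lt _) hshift
  refine ⟨hd.eq_of_eqOn_erase hd' hr fun i hi => ?_, sub_eq_zero.1 ((ZMod.val_eq_zero _).1 ht)⟩
  have ⟨hir, hiS⟩ := mem_erase.1 hi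
  have := hd.add_two_le_card hr hiS hir
  have := hd'.add_two_le_card hr hiS hir
  rcases eq_add_or_add_eq_add_of_natCast_eq (by omega) (by omega) (ZMod.val_lt _)
    (hshift i hi) with h' | h' <;> omega

end InHalfOpenPermutohedron

end Uniqueness

section Existence

variable {S K : Finset α} {r : α} {y : α → ℤ}

def perturbedEnergy (S : Finset α) (r : α) (y : α → ℤ) : ℤ := ∑ x ∈ S, y x ^ 2 - y r

theorem perturbedEnergy_nonneg (hr : r ∈ S) (y : α → ℤ) : 0 ≤ perturbedEnergy S r y := by
  have := single_le_sum (fun x _ => sq_nonneg (y x)) hr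
  have := Int.le_self_sq (y r)
  unfold perturbedEnergy
  linarith

variable [DecidableEq α]

def facetNormal (S K : Finset α) (x : α) : ℤ :=
  #S * (if x ∈ K then 1 else 0) - #K * (if x ∈ S then 1 else 0)

theorem facetNormal_of_notMem (hK : K ⊆ S) {x : α} (hx : x ∉ S) : facetNormal S K x = 0 := by
  have hxK : x ∉ K := fun h => hx (hK h)
  simp [facetNormal, hx, hxK]

theorem sum_facetNormal_mul (hK : K ⊆ S) (g : α → ℤ) :
    ∑ x ∈ S, facetNormal S K x * g x = #S * ∑ x ∈ K, g x - #K * ∑ x ∈ S, g x := by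
  simp only [facetNormal, sub_mul, mul_assoc, ite_mul, one_mul, zero_mul, sum_sub_distrib,
    ← mul_sum, sum_ite_mem, inter_eq_right.2 hK, inter_self]

theorem neg_card_lt_facetNormal (hK : K ⊆ S) (hr : r ∈ S) : -(#S : ℤ) < facetNormal S K r := by
  by_cases hrK : r ∈ K
  · have := card_le_card hK
    have := card_pos.2 ⟨r, hr⟩
    simp only [facetNormal, hrK, hr, if_true]
    omega
  · have := card_lt_card ⟨hK, fun h => hrK (h hr)⟩
    simp only [facetNormal, hrK, hr, if_true, if_false]
    omega

theorem facetNormal_pos (hK : K ⊂ S) (hrK : r ∈ K) : 0 < facetNormal S K r := by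
  have := card_lt_card hK
  simp only [facetNormal, hrK, hK.subset hrK, if_true]
  omega

theorem perturbedEnergy_add_facetNormal (hK : K ⊆ S) (hy : ∑ x ∈ S, y x = (#S).choose 2) :
    perturbedEnergy S r (y + facetNormal S K) = perturbedEnergy S r y
      + 2 * #S * (∑ x ∈ K, y x - (#K).choose 2) - facetNormal S K r := by
  have hsum : ∑ x ∈ S, facetNormal S K x = 0 := by
    simpa [mul_comm] using sum_facetNormal_mul hK 1
  have hsumK : ∑ x ∈ K, facetNormal S K x = #K * (#S - #K) := by
    rw [sum_congr rfl fun x hx => show facetNormal S K x = #S - #K by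
      simp [facetNormal, hx, hK hx]]
    simp [mul_sub]
  have hsq := sum_facetNormal_mul hK (facetNormal S K)
  have hlin := sum_facetNormal_mul hK y
  have hexp : ∀ x, (y x + facetNormal S K x) ^ 2
      = y x ^ 2 + 2 * (facetNormal S K x * y x) + facetNormal S K x * facetNormal S K x :=
    fun x => by ring
  simp only [perturbedEnergy, Pi.add_apply, hexp, sum_add_distrib, ← mul_sum]
  rw [hsq, hlin, hsum, hsumK, hy]
  linear_combination (-(#K : ℤ)) * two_mul_choose_two_cast (#S)
    + (#S : ℤ) * two_mul_choose_two_cast (#K)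

theorem choose_two_le_sum_of_perturbedEnergy_le (hK : K ⊆ S) (hr : r ∈ S)
    (hy : ∑ x ∈ S, y x = (#S).choose 2)
    (hmin : perturbedEnergy S r y ≤ perturbedEnergy S r (y + facetNormal S K)) :
    ((#K).choose 2 : ℤ) ≤ ∑ x ∈ K, y x := by
  rw [perturbedEnergy_add_facetNormal hK hy] at hmin
  have := neg_card_lt_facetNormal hK hr
  by_contra! h
  nlinarith

theorem choose_two_lt_sum_of_perturbedEnergy_le (hK : K ⊂ S) (hrK : r ∈ K)
    (hy : ∑ x ∈ S, y x = (#S).choose 2)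
    (hmin : perturbedEnergy S r y ≤ perturbedEnergy S r (y + facetNormal S K)) :
    ((#K).choose 2 : ℤ) < ∑ x ∈ K, y x := by
  rw [perturbedEnergy_add_facetNormal hK.subset hy] at hmin
  have := facetNormal_pos hK hrK
  by_contra! h
  nlinarith

def residueClass (S : Finset α) (r : α) (f : α → ZMod #S) : Set (α → ℤ) :=
  {y | (∀ x ∉ S, y x = 0) ∧ ∑ x ∈ S, y x = (#S).choose 2 ∧
    ∃ c : ZMod #S, ∀ i ∈ S.erase r, (y i : ZMod #S) = f i + c}

theorem add_facetNormal_mem_residueClass {f : α → ZMod #S} (hK : K ⊆ S)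
    (hy : y ∈ residueClass S r f) : y + facetNormal S K ∈ residueClass S r f := by
  obtain ⟨hy₀, hsum, c, hc⟩ := hy
  refine ⟨fun x hx => ?_, ?_, c - #K, fun i hi => ?_⟩
  · simp [hy₀ x hx, facetNormal_of_notMem hK hx]
  · have := sum_facetNormal_mul hK 1
    simp only [Pi.one_apply, mul_one, sum_const, nsmul_eq_mul] at this
    simp only [Pi.add_apply, sum_add_distrib, hsum, this]
    ring
  · simp [facetNormal, (mem_erase.1 hi).2, hc i hi]
    ring

theorem residueClass_nonempty (hr : r ∈ S) (f : α → ZMod #S) :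
    (residueClass S r f).Nonempty := by
  have : NeZero #S := ⟨card_ne_zero_of_mem hr⟩
  set y : α → ℤ := fun x => if x ∈ S then ((f x).val : ℤ) else 0
  refine ⟨Function.update y r ((#S).choose 2 - ∑ x ∈ S.erase r, y x), fun x hx => ?_, ?_, 0,
    fun i hi => ?_⟩
  · simp [Function.update_of_ne (ne_of_mem_of_not_mem hr hx).symm, y, hx]
  · rw [← add_sum_erase S _ hr, Function.update_self,
      sum_congr rfl fun x hx => Function.update_of_ne (mem_erase.1 hx).1 _ _]
    ring
  · simp [Function.update_of_ne (mem_erase.1 hi).1, y, (mem_erase.1 hi).2]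

theorem exists_mem_residueClass_perturbedEnergy_le (hr : r ∈ S) (f : α → ZMod #S) :
    ∃ y ∈ residueClass S r f, ∀ z ∈ residueClass S r f,
      perturbedEnergy S r y ≤ perturbedEnergy S r z := by
  obtain ⟨y₀, hy₀⟩ := residueClass_nonempty hr f
  obtain ⟨_, ⟨y, hy, rfl⟩, hmin⟩ := Int.exists_least_of_bdd
    (P := fun e => ∃ y ∈ residueClass S r f, perturbedEnergy S r y = e)
    ⟨0, fun _ ⟨z, _, hz⟩ => hz ▸ perturbedEnergy_nonneg hr z⟩ ⟨_, y₀, hy₀, rfl⟩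
  exact ⟨y, hy, fun z hz => hmin _ ⟨z, hz, rfl⟩⟩

namespace InHalfOpenPermutohedron

variable {S : Finset α} {r : α}

theorem of_int {y : α → ℤ} (hy₀ : ∀ x ∉ S, y x = 0) (hsum : ∑ x ∈ S, y x = (#S).choose 2)
    (hle : ∀ K ⊆ S, ((#K).choose 2 : ℤ) ≤ ∑ x ∈ K, y x)
    (hlt : ∀ K ⊆ S, r ∈ K → K ≠ S → ((#K).choose 2 : ℤ) < ∑ x ∈ K, y x) :
    InHalfOpenPermutohedron S r fun x => (y x).toNat := by
  have hnonneg : ∀ x, 0 ≤ y x := fun x => by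
    by_cases hx : x ∈ S
    · simpa using hle {x} (singleton_subset_iff.2 hx)
    · exact (hy₀ x hx).ge
  have hcast : ∀ K : Finset α, ((∑ x ∈ K, (y x).toNat : ℕ) : ℤ) = ∑ x ∈ K, y x := fun K => by
    push_cast
    exact sum_congr rfl fun x _ => Int.toNat_of_nonneg (hnonneg x)
  refine ⟨fun x hx => by simp [hy₀ x hx], ?_, fun K hK => ?_, fun K hK hrK hKS => ?_⟩
  · exact_mod_cast (hcast S).trans hsum
  · exact_mod_cast (hcast K).symm ▸ hle K hK
  · exact_mod_cast (hcast K).symm ▸ hlt K hK hrK hKS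

theorem exists_natCast_eq_add (hr : r ∈ S) (f : α → ZMod #S) :
    ∃ d, InHalfOpenPermutohedron S r d ∧
      ∃ c : ZMod #S, ∀ i ∈ S.erase r, (d i : ZMod #S) = f i + c := by
  obtain ⟨y, hy, hmin⟩ := exists_mem_residueClass_perturbedEnergy_le hr f
  have hmove : ∀ K ⊆ S, perturbedEnergy S r y ≤ perturbedEnergy S r (y + facetNormal S K) :=
    fun K hK => hmin _ (add_facetNormal_mem_residueClass hK hy)
  obtain ⟨hy₀, hsum, c, hc⟩ := hy
  have hle : ∀ K ⊆ S, ((#K).choose 2 : ℤ) ≤ ∑ x ∈ K, y x := fun K hK =>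
    choose_two_le_sum_of_perturbedEnergy_le hK hr hsum (hmove K hK)
  refine ⟨_, of_int hy₀ hsum hle (fun K hK hrK hKS => choose_two_lt_sum_of_perturbedEnergy_le
    (ssubset_of_subset_of_ne hK hKS) hrK hsum (hmove K hK)), c, fun i hi => ?_⟩
  have : 0 ≤ y i := by simpa using hle {i} (singleton_subset_iff.2 (mem_erase.1 hi).2)
  rw [← hc i hi, ← Int.cast_natCast, Int.toNat_of_nonneg this]

theorem ncard_setOf (hr : r ∈ S) :
    {d | InHalfOpenPermutohedron S r d}.ncard = #S ^ (#S - 2) := by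
  have : NeZero #S := ⟨card_ne_zero_of_mem hr⟩
  let shift : {d | InHalfOpenPermutohedron S r d} × ZMod #S → (S.erase r → ZMod #S) :=
    fun p i => (p.1.1 i : ZMod #S) + p.2
  have hbij : Function.Bijective shift := by
    refine ⟨fun ⟨⟨d, hd⟩, j⟩ ⟨⟨d', hd'⟩, j'⟩ h => ?_, fun f => ?_⟩
    · obtain ⟨rfl, rfl⟩ := hd.eq_and_eq_of_natCast_add_eq hd' hr fun i hi => congrFun h ⟨i, hi⟩
      rfl
    · obtain ⟨d, hd, c, hc⟩ :=
        exists_natCast_eq_add hr fun i => if hi : i ∈ S.erase r then f ⟨i, hi⟩ else 0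
      refine ⟨(⟨d, hd⟩, -c), funext fun i => ?_⟩
      simp [shift, hc i i.2]
  have hcard := Nat.card_eq_of_bijective shift hbij
  rw [Nat.card_prod, Nat.card_coe_set_eq, Nat.card_zmod, Nat.card_eq_fintype_card,
    Fintype.card_fun, Fintype.card_coe, card_erase_of_mem hr, ZMod.card] at hcard
  obtain h | h := Nat.lt_or_ge (#S) 2
  · have h₁ : #S = 1 := by have := card_pos.2 ⟨r, hr⟩; omega
    simpa [h₁] using hcard
  · rw [show #S - 1 = #S - 2 + 1 by omega, pow_succ] at hcard
    exact Nat.eq_of_mul_eq_mul_right (by omega) hcard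

end InHalfOpenPermutohedron

end Existence

section Decomposition

variable [Fintype α] {J A K : Finset α} {r v : α} {b c d : α → ℕ}

/-- The set `Z_J`, for the complete graph on an arbitrary finite vertex type `α`, with the last
vertex `n - 1` replaced by an arbitrary vertex `v`. -/
structure InZ (v : α) (J : Finset α) (b : α → ℕ) : Prop where
  sum_eq : ∑ i, b i = (Fintype.card α).choose 2 - 1
  sum_add_one_le : ∀ I : Finset α, I.Nonempty →
    ∑ i ∈ I, b i + 1 ≤ edgesMeeting (Fintype.card α) #I
  sum_add_one_eq : ∑ j ∈ J, b j + 1 = edgesMeeting (Fintype.card α) #J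
  sum_add_one_lt : ∀ J' : Finset α, J ⊂ J' → v ∉ J' →
    ∑ j ∈ J', b j + 1 < edgesMeeting (Fintype.card α) #J'

theorem InZ.sum_add_one_eq_choose_two [Nonempty α] (hb : InZ v J b) :
    ∑ i, b i + 1 = (Fintype.card α).choose 2 := by
  have := hb.sum_add_one_le univ univ_nonempty
  rw [card_univ, edgesMeeting_self] at this
  have := hb.sum_eq
  omega

variable [DecidableEq α]

def glue (J : Finset α) (r : α) (c d : α → ℕ) (x : α) : ℕ :=
  if x ∈ J then c x + #Jᶜ - (if x = r then 1 else 0) else d x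

theorem glue_add_ite (hJ : Jᶜ.Nonempty) {x : α} (hx : x ∈ J) :
    glue J r c d x + (if x = r then 1 else 0) = c x + #Jᶜ := by
  have := card_pos.2 hJ
  simp only [glue, hx, if_true]
  split <;> omega

theorem sum_glue_add_ite (hJ : Jᶜ.Nonempty) (hA : A ⊆ J) :
    ∑ x ∈ A, glue J r c d x + (if r ∈ A then 1 else 0) = ∑ x ∈ A, c x + #A * #Jᶜ := by
  rw [← sum_ite_eq' A r fun _ => 1, ← sum_add_distrib,
    sum_congr rfl fun x hx => glue_add_ite hJ (hA hx), sum_add_distrib, sum_const, smul_eq_mul]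

theorem sum_glue_of_subset_compl (hK : K ⊆ Jᶜ) :
    ∑ x ∈ K, glue J r c d x = ∑ x ∈ K, d x :=
  sum_congr rfl fun x hx => by simp [glue, mem_compl.1 (hK hx)]

theorem sum_glue_add_one_le_of_subset (hc : InHalfOpenPermutohedron J r c) (hr : r ∈ J)
    (hJ : Jᶜ.Nonempty) (hA : A ⊆ J) (hA₀ : A.Nonempty) :
    ∑ x ∈ A, glue J r c d x + 1 ≤ edgesMeeting (Fintype.card α) #A := by
  rw [← card_add_card_compl J, edgesMeeting_add_right _ (card_le_card hA)]
  have := sum_glue_add_ite (r := r) (c := c) (d := d) hJ hA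
  by_cases hrA : r ∈ A
  · have := hc.sum_le_edgesMeeting hA
    simp only [hrA, if_true] at *
    omega
  · have := hc.sum_lt_edgesMeeting hA hr hrA hA₀
    simp only [hrA, if_false] at *
    omega

theorem sum_glue_add_mul_le (hd : InHalfOpenPermutohedron Jᶜ v d) (hK : K ⊆ Jᶜ) :
    ∑ x ∈ K, glue J r c d x + #K * #J ≤ edgesMeeting (Fintype.card α) #K := by
  rw [← card_compl_add_card J, edgesMeeting_add_right _ (card_le_card hK),
    sum_glue_of_subset_compl hK]
  have := hd.sum_le_edgesMeeting hK
  omega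

theorem sum_glue_add_mul_lt (hd : InHalfOpenPermutohedron Jᶜ v d) (hv : v ∉ J) (hK : K ⊆ Jᶜ)
    (hvK : v ∉ K) (hK₀ : K.Nonempty) :
    ∑ x ∈ K, glue J r c d x + #K * #J < edgesMeeting (Fintype.card α) #K := by
  rw [← card_compl_add_card J, edgesMeeting_add_right _ (card_le_card hK),
    sum_glue_of_subset_compl hK]
  have := hd.sum_lt_edgesMeeting hK (mem_compl.2 hv) hvK hK₀
  omega


theorem sum_glue_add_one_eq (hc : InHalfOpenPermutohedron J r c) (hr : r ∈ J)
    (hJ : Jᶜ.Nonempty) : ∑ x ∈ J, glue J r c d x + 1 = edgesMeeting (Fintype.card α) #J := by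
  have := sum_glue_add_ite (r := r) (c := c) (d := d) hJ (subset_refl J)
  rw [if_pos hr, hc.sum_eq] at this
  rw [← card_add_card_compl J, edgesMeeting_add_right _ le_rfl, edgesMeeting_self, this]

theorem sum_glue_add_one_le (hc : InHalfOpenPermutohedron J r c)
    (hd : InHalfOpenPermutohedron Jᶜ v d) (hr : r ∈ J) (hJ : Jᶜ.Nonempty) {I : Finset α}
    (hI : I.Nonempty) : ∑ x ∈ I, glue J r c d x + 1 ≤ edgesMeeting (Fintype.card α) #I := by
  have hIJ : I \ J ⊆ Jᶜ := fun x hx => mem_compl.2 (mem_sdiff.1 hx).2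
  obtain hIJ₀ | hIJ₀ := (I ∩ J).eq_empty_or_nonempty
  · have := sum_glue_add_mul_le (r := r) (c := c) hd
      (subset_compl_iff_disjoint_right.2 (disjoint_iff_inter_eq_empty.2 hIJ₀))
    have := Nat.mul_pos (card_pos.2 hI) (card_pos.2 ⟨r, hr⟩)
    omega
  · rw [← sum_inter_add_sum_sdiff I J, ← card_inter_add_card_sdiff I J, add_right_comm]
    exact add_le_edgesMeeting_add ((card_inter_add_card_sdiff I J).trans_le (card_le_univ I))
      (card_le_card inter_subset_right)
      (sum_glue_add_one_le_of_subset hc hr hJ inter_subset_right hIJ₀)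
      (sum_glue_add_mul_le hd hIJ)


theorem sum_glue_add_one_lt (hc : InHalfOpenPermutohedron J r c)
    (hd : InHalfOpenPermutohedron Jᶜ v d) (hr : r ∈ J) (hv : v ∉ J) {J' : Finset α}
    (hJJ' : J ⊂ J') (hvJ' : v ∉ J') :
    ∑ x ∈ J', glue J r c d x + 1 < edgesMeeting (Fintype.card α) #J' := by
  have hJ : Jᶜ.Nonempty := ⟨v, mem_compl.2 hv⟩
  have hK : J' \ J ⊆ Jᶜ := fun x hx => mem_compl.2 (mem_sdiff.1 hx).2
  have hK₀ : (J' \ J).Nonempty := sdiff_nonempty.2 hJJ'.not_subset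
  have := sum_glue_add_mul_lt (r := r) (c := c) hd hv hK (fun h => hvJ' (mem_sdiff.1 h).1) hK₀
  have hcard := card_sdiff_add_card_eq_card hJJ'.subset
  have := add_le_edgesMeeting_add (by rw [add_comm, hcard]; exact card_le_univ J') le_rfl
    (sum_glue_add_one_eq (d := d) hc hr hJ).le (y := ∑ x ∈ J' \ J, glue J r c d x + 1) (by omega)
  rw [← sum_sdiff hJJ'.subset, ← hcard, add_comm (#(J' \ J))]
  omega

theorem sum_glue_eq (hc : InHalfOpenPermutohedron J r c) (hd : InHalfOpenPermutohedron Jᶜ v d)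
    (hr : r ∈ J) (hv : v ∉ J) : ∑ x, glue J r c d x = (Fintype.card α).choose 2 - 1 := by
  have hJ := sum_glue_add_one_eq (d := d) hc hr ⟨v, mem_compl.2 hv⟩
  rw [← sum_add_sum_compl J, sum_glue_of_subset_compl (subset_refl _), hd.sum_eq,
    ← card_add_card_compl J, choose_two_add]
  rw [← card_add_card_compl J, edgesMeeting_add_right _ le_rfl, edgesMeeting_self] at hJ
  omega

theorem glue_inZ (hc : InHalfOpenPermutohedron J r c) (hd : InHalfOpenPermutohedron Jᶜ v d)
    (hr : r ∈ J) (hv : v ∉ J) : InZ v J (glue J r c d) :=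
  ⟨sum_glue_eq hc hd hr hv, fun _ => sum_glue_add_one_le hc hd hr ⟨v, mem_compl.2 hv⟩,
    sum_glue_add_one_eq hc hr ⟨v, mem_compl.2 hv⟩, fun _ => sum_glue_add_one_lt hc hd hr hv⟩


namespace InZ

theorem sum_compl [Nonempty α] (hb : InZ v J b) : ∑ x ∈ Jᶜ, b x = (#Jᶜ).choose 2 := by
  have h₁ := hb.sum_add_one_eq_choose_two
  have h₂ := hb.sum_add_one_eq
  rw [← sum_add_sum_compl J, ← card_add_card_compl J, choose_two_add] at h₁
  rw [← card_add_card_compl J, edgesMeeting_add_right _ le_rfl, edgesMeeting_self] at h₂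
  omega

theorem le_sum_of_ssubset (hb : InZ v J b) (hA : A ⊂ J) :
    (#A).choose 2 + #A * #Jᶜ ≤ ∑ x ∈ A, b x := by
  have h₁ := hb.sum_add_one_le (J \ A) (sdiff_nonempty.2 hA.not_subset)
  have h₂ := hb.sum_add_one_eq
  have h₃ := sum_sdiff hA.subset (f := b)
  have hcard := card_sdiff_add_card_eq_card hA.subset
  have h₄ := edgesMeeting_add_add_mul (N := Fintype.card α) (a := #(J \ A)) (k := #A)
    (hcard ▸ card_le_univ J)
  have h₅ : edgesMeeting (Fintype.card α) #A = (#A).choose 2 + #(J \ A) * #A + #A * #Jᶜ := by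
    rw [← card_add_card_compl J, edgesMeeting, ← hcard]
    rw [show #(J \ A) + #A + #Jᶜ - #A = #(J \ A) + #Jᶜ by omega]
    ring
  rw [hcard] at h₄
  omega

theorem sum_union_sdiff_add_sum [Nonempty α] (hb : InZ v J b) (hK : K ⊆ Jᶜ) :
    ∑ x ∈ J ∪ (Jᶜ \ K), b x + 1 + ∑ x ∈ K, b x
      = edgesMeeting (Fintype.card α) #(J ∪ (Jᶜ \ K)) + (#K).choose 2 := by
  have hdisj : Disjoint J (Jᶜ \ K) := disjoint_of_subset_right sdiff_subset disjoint_compl_right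
  have h₁ := hb.sum_add_one_eq
  have h₂ := sum_sdiff hK (f := b)
  have h₃ := hb.sum_compl
  have h₄ := edgesMeeting_add_add_choose_two #J #K #(Jᶜ \ K)
  rw [add_comm #K, card_sdiff_add_card_eq_card hK, card_add_card_compl] at h₄
  rw [sum_union hdisj, card_union_of_disjoint hdisj]
  omega

theorem choose_two_le_sum_of_subset_compl (hb : InZ v J b) (hr : r ∈ J) (hK : K ⊆ Jᶜ) :
    (#K).choose 2 ≤ ∑ x ∈ K, b x := by
  have : Nonempty α := ⟨r⟩
  have := hb.sum_add_one_le (J ∪ (Jᶜ \ K)) ⟨r, mem_union_left _ hr⟩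
  have := hb.sum_union_sdiff_add_sum hK
  omega

theorem choose_two_lt_sum_of_subset_compl (hb : InZ v J b) (hK : K ⊆ Jᶜ) (hvK : v ∈ K)
    (hKJ : K ≠ Jᶜ) : (#K).choose 2 < ∑ x ∈ K, b x := by
  have : Nonempty α := ⟨v⟩
  obtain ⟨x, hx⟩ := sdiff_nonempty.2 fun h => hKJ (subset_antisymm hK h)
  have hJ : J ⊂ J ∪ (Jᶜ \ K) := (ssubset_iff_of_subset subset_union_left).2
    ⟨x, mem_union_right _ hx, mem_compl.1 (mem_sdiff.1 hx).1⟩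
  have hv : v ∉ J ∪ (Jᶜ \ K) := by
    simp [mem_compl.1 (hK hvK), hvK]
  have := hb.sum_add_one_lt _ hJ hv
  have := hb.sum_union_sdiff_add_sum hK
  omega

theorem card_compl_le_add_ite (hb : InZ v J b) (hr : r ∈ J) {x : α} (hx : x ∈ J) :
    #Jᶜ ≤ b x + if x = r then 1 else 0 := by
  by_cases hxJ : {x} = J
  · subst hxJ
    obtain rfl := mem_singleton.1 hr
    have := hb.sum_add_one_eq
    simp only [sum_singleton, card_singleton, edgesMeeting, Nat.choose_succ_self, one_mul,
      zero_add] at this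
    simp [card_compl, this]
  · have := hb.le_sum_of_ssubset (ssubset_of_subset_of_ne (singleton_subset_iff.2 hx) hxJ)
    simp only [card_singleton, Nat.choose_succ_self, one_mul, zero_add, sum_singleton] at this
    omega

theorem inHalfOpenPermutohedron_of_glue (hb : InZ v J (glue J r c d)) (hr : r ∈ J) (hv : v ∉ J)
    (hc₀ : ∀ x ∉ J, c x = 0) : InHalfOpenPermutohedron J r c := by
  have hsum : ∀ A ⊆ J, ∑ x ∈ A, glue J r c d x + (if r ∈ A then 1 else 0)
      = ∑ x ∈ A, c x + #A * #Jᶜ := fun A hA => sum_glue_add_ite ⟨v, mem_compl.2 hv⟩ hA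
  have hsumJ : ∑ x ∈ J, c x = (#J).choose 2 := by
    have := hb.sum_add_one_eq
    rw [← card_add_card_compl J, edgesMeeting_add_right _ le_rfl, edgesMeeting_self] at this
    have := hsum J (subset_refl J)
    simp only [hr, if_true] at this
    omega
  refine ⟨hc₀, hsumJ, fun A hA => ?_, fun A hA hrA hAJ => ?_⟩
  · obtain rfl | hAJ := eq_or_ne A J
    · exact hsumJ.ge
    have := hb.le_sum_of_ssubset (ssubset_of_subset_of_ne hA hAJ)
    have := hsum A hA
    split at this <;> omega
  · have := hb.le_sum_of_ssubset (ssubset_of_subset_of_ne hA hAJ)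
    have := hsum A hA
    simp only [hrA, if_true] at this
    omega

theorem inHalfOpenPermutohedron_compl_of_glue (hb : InZ v J (glue J r c d)) (hr : r ∈ J)
    (hd₀ : ∀ x ∉ Jᶜ, d x = 0) : InHalfOpenPermutohedron Jᶜ v d := by
  have : Nonempty α := ⟨r⟩
  refine ⟨hd₀, ?_, fun K hK => ?_, fun K hK hvK hKJ => ?_⟩
  · rw [← sum_glue_of_subset_compl (r := r) (c := c) (subset_refl _)]
    exact hb.sum_compl
  · rw [← sum_glue_of_subset_compl (r := r) (c := c) hK]
    exact hb.choose_two_le_sum_of_subset_compl hr hK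
  · rw [← sum_glue_of_subset_compl (r := r) (c := c) hK]
    exact hb.choose_two_lt_sum_of_subset_compl hK hvK hKJ

theorem exists_glue_eq (hb : InZ v J b) (hr : r ∈ J) :
    ∃ c d, (∀ x ∉ J, c x = 0) ∧ (∀ x ∉ Jᶜ, d x = 0) ∧ glue J r c d = b := by
  refine ⟨fun x => if x ∈ J then b x + (if x = r then 1 else 0) - #Jᶜ else 0,
    fun x => if x ∈ J then 0 else b x, fun x hx => by simp [hx],
    fun x hx => by simp [not_not.1 (mt mem_compl.2 hx)], funext fun x => ?_⟩
  by_cases hx : x ∈ J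
  · have := hb.card_compl_le_add_ite hr hx
    simp only [glue, hx, if_true]
    split_ifs at * <;> omega
  · simp [glue, hx]

end InZ

theorem glue_injOn (hv : v ∉ J) :
    Set.InjOn (fun p : (α → ℕ) × (α → ℕ) => glue J r p.1 p.2)
      ({c | InHalfOpenPermutohedron J r c} ×ˢ {d | InHalfOpenPermutohedron Jᶜ v d}) := by
  rintro ⟨c, d⟩ ⟨hc, hd⟩ ⟨c', d'⟩ ⟨hc', hd'⟩ h
  have hJ : Jᶜ.Nonempty := ⟨v, mem_compl.2 hv⟩
  simp only [Set.mem_ofPred_eq] at hc hd hc' hd' h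
  refine Prod.ext (funext fun x => ?_) (funext fun x => ?_) <;> dsimp only
  · by_cases hx : x ∈ J
    · have := glue_add_ite (r := r) (c := c) (d := d) hJ hx
      have := glue_add_ite (r := r) (c := c') (d := d') hJ hx
      rw [h] at *
      omega
    · rw [hc.eq_zero_of_notMem x hx, hc'.eq_zero_of_notMem x hx]
  · by_cases hx : x ∈ J
    · have hx' : x ∉ Jᶜ := fun h => mem_compl.1 h hx
      rw [hd.eq_zero_of_notMem x hx', hd'.eq_zero_of_notMem x hx']
    · simpa [glue, hx] using congrFun h x

theorem ncard_setOf_inZ (hr : r ∈ J) (hv : v ∉ J) :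
    {b | InZ v J b}.ncard = #J ^ (#J - 2) * #Jᶜ ^ (#Jᶜ - 2) := by
  have himage : (fun p : (α → ℕ) × (α → ℕ) => glue J r p.1 p.2) ''
      ({c | InHalfOpenPermutohedron J r c} ×ˢ {d | InHalfOpenPermutohedron Jᶜ v d})
      = {b | InZ v J b} := by
    refine subset_antisymm ?_ fun b hb => ?_
    · rintro _ ⟨⟨c, d⟩, ⟨hc, hd⟩, rfl⟩
      exact glue_inZ hc hd hr hv
    · obtain ⟨c, d, hc₀, hd₀, rfl⟩ := InZ.exists_glue_eq hb hr
      exact ⟨(c, d), ⟨hb.inHalfOpenPermutohedron_of_glue hr hv hc₀,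
        hb.inHalfOpenPermutohedron_compl_of_glue hr hd₀⟩, rfl⟩
  rw [← himage, (glue_injOn hv).ncard_image, Set.ncard_prod,
    InHalfOpenPermutohedron.ncard_setOf hr, InHalfOpenPermutohedron.ncard_setOf (mem_compl.2 hv)]

end Decomposition

theorem kappaComplete_eq_edgesMeeting {n : ℕ} (I : Finset (Fin n)) :
    kappaComplete n I = edgesMeeting (Fintype.card (Fin n)) #I := by
  rw [kappaComplete, edgesMeeting, Nat.choose_two_right, Fintype.card_fin]

theorem card_ZJ_general (n : ℕ)
    (J : Finset (Fin n)) (hJne : J.Nonempty) (hJlast : ∀ j ∈ J, (j : ℕ) ≠ n - 1) :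
    Set.ncard {b : Fin n → ℕ |
        (∑ i : Fin n, b i = n * (n - 1) / 2 - 1) ∧
        (∀ I : Finset (Fin n), I.Nonempty → ∑ i ∈ I, b i + 1 ≤ kappaComplete n I) ∧
        (∑ j ∈ J, b j + 1 = kappaComplete n J) ∧
        (∀ J' : Finset (Fin n), J ⊂ J' → (∀ j ∈ J', (j : ℕ) ≠ n - 1) →
          ∑ j ∈ J', b j + 1 < kappaComplete n J')} =
      J.card ^ (J.card - 2) * (n - J.card) ^ ((n - J.card) - 2) := by
  obtain ⟨r, hr⟩ := hJne
  let v : Fin n := ⟨n - 1, by have := r.pos; omega⟩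
  have hv : v ∉ J := fun h => hJlast v h rfl
  have hlast (J' : Finset (Fin n)) : (∀ j ∈ J', (j : ℕ) ≠ n - 1) ↔ v ∉ J' :=
    ⟨fun h hvJ' => h v hvJ' rfl, fun h j hj hjv => h (Fin.ext (b := v) hjv ▸ hj)⟩
  have hchoose : n * (n - 1) / 2 = (Fintype.card (Fin n)).choose 2 := by
    rw [Fintype.card_fin, Nat.choose_two_right]
  simp only [kappaComplete_eq_edgesMeeting, hlast, hchoose]
  have hcount := ncard_setOf_inZ hr hv
  rw [card_compl, Fintype.card_fin] at hcount
  rw [← hcount]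
  congr 1
  ext b
  exact ⟨fun ⟨h₁, h₂, h₃, h₄⟩ => ⟨h₁, h₂, h₃, h₄⟩, fun ⟨h₁, h₂, h₃, h₄⟩ => ⟨h₁, h₂, h₃, h₄⟩⟩

/-- Counting the set `Z_J` arising in the computation of the top graded component
of the internal bizonotopal algebra of `K_n`: for a nonempty `J ⊆ [n−1]` of size
`ℓ`, the number of vectors `b` of total weight `C(n,2) − 1` with
`∑_{i∈I} b i ≤ κ_I − 1` for all nonempty `I`, equality for `I = J`, and strict
inequality for every `J'` with `J ⊊ J' ⊆ [n−1]`, equals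
`ℓ^{ℓ−2} (n−ℓ)^{(n−ℓ)−2}`, the product of the numbers of spanning trees of `K_ℓ`
and `K_{n−ℓ}`. -/
theorem card_ZJ (n : ℕ) (hn : 4 ≤ n)
    (J : Finset (Fin n)) (hJne : J.Nonempty) (hJlast : ∀ j ∈ J, (j : ℕ) ≠ n - 1) :
    Set.ncard {b : Fin n → ℕ |
        (∑ i : Fin n, b i = n * (n - 1) / 2 - 1) ∧
        (∀ I : Finset (Fin n), I.Nonempty → ∑ i ∈ I, b i + 1 ≤ kappaComplete n I) ∧
        (∑ j ∈ J, b j + 1 = kappaComplete n J) ∧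
        (∀ J' : Finset (Fin n), J ⊂ J' → (∀ j ∈ J', (j : ℕ) ≠ n - 1) →
          ∑ j ∈ J', b j + 1 < kappaComplete n J')} =
      J.card ^ (J.card - 2) * (n - J.card) ^ ((n - J.card) - 2) :=
  card_ZJ_general n J hJne hJlast
end

section
/- Let G be a simple graph on a finite vertex type V with n = |V| ≥ 4 vertices in which every vertex has degree 3. For S ⊆ V let κ_S denote the number of edges of G having at least one endpoint in S. Then for every k ∈ ℕ, the number of vectors a : V → ℕ with ∑_{v∈V} a_v = k and ∑_{v∈S} a_v + 2 ≤ κ_S for every nonempty subset S ⊆ V equals the binomial coefficient C(n, k). (Equivalently, the Hilbert series of the internal bizonotopal algebra B_G^i equals (1+t)^n.) -/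
open Finset

/-- The degree `κ_S` of a subset `S` of vertices of a simple graph: the number of
edges of `G` having at least one endpoint in `S`. -/
def simpleGraphKappa {V : Type*} [Fintype V] [DecidableEq V]
    (G : SimpleGraph V) [DecidableRel G.Adj] (S : Finset V) : ℕ :=
  (G.edgeFinset.filter fun p => ∃ v ∈ S, v ∈ p).card

section aux
variable {V : Type*} [Fintype V] [DecidableEq V]
    (G : SimpleGraph V) [DecidableRel G.Adj]

lemma kappa_key (S : Finset V) :
    ∑ v ∈ S, G.degree v =
      simpleGraphKappa G S + (G.edgeFinset.filter fun p => ∀ v ∈ p, v ∈ S).card := by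
  have h1 : ∀ v : V, G.degree v = (G.edgeFinset.filter fun e => v ∈ e).card := by
    intro v
    rw [← SimpleGraph.card_incidenceFinset_eq_degree, SimpleGraph.incidenceFinset_eq_filter]
  calc ∑ v ∈ S, G.degree v
      = ∑ v ∈ S, ∑ e ∈ G.edgeFinset, (if v ∈ e then 1 else 0) := by
        refine Finset.sum_congr rfl fun v _ => ?_
        rw [h1, Finset.card_filter]
    _ = ∑ e ∈ G.edgeFinset, ∑ v ∈ S, (if v ∈ e then 1 else 0) := Finset.sum_comm
    _ = ∑ e ∈ G.edgeFinset,
          ((if ∃ v ∈ S, v ∈ e then 1 else 0) + (if ∀ v ∈ e, v ∈ S then 1 else 0)) := by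
        apply Finset.sum_congr rfl
        intro e he
        induction e with
        | _ x y =>
          have hxy : G.Adj x y := by
            rwa [SimpleGraph.mem_edgeFinset, SimpleGraph.mem_edgeSet] at he
          have hne : x ≠ y := hxy.ne
          rw [← Finset.card_filter]
          by_cases hx : x ∈ S <;> by_cases hy : y ∈ S
          · rw [if_pos ⟨x, hx, Sym2.mem_mk_left x y⟩,
              if_pos (fun v hv => by rcases Sym2.mem_iff.mp hv with rfl | rfl <;> assumption)]
            have hfe : S.filter (fun v => v ∈ s(x, y)) = {x, y} := by
              ext v
              simp only [Finset.mem_filter, Sym2.mem_iff, Finset.mem_insert, Finset.mem_singleton]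
              constructor
              · exact fun h => h.2
              · rintro (rfl | rfl) <;> exact ⟨by assumption, by tauto⟩
            rw [hfe, Finset.card_insert_of_notMem (by simp [hne]), Finset.card_singleton]
          · rw [if_pos ⟨x, hx, Sym2.mem_mk_left x y⟩,
              if_neg (fun h => hy (h y (Sym2.mem_mk_right x y)))]
            have hfe : S.filter (fun v => v ∈ s(x, y)) = {x} := by
              ext v
              simp only [Finset.mem_filter, Sym2.mem_iff, Finset.mem_singleton]
              constructor
              · rintro ⟨hv, rfl | rfl⟩
                · rfl
                · exact absurd hv hy
              · rintro rfl
                exact ⟨hx, Or.inl rfl⟩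
            rw [hfe, Finset.card_singleton]
          · rw [if_pos ⟨y, hy, Sym2.mem_mk_right x y⟩,
              if_neg (fun h => hx (h x (Sym2.mem_mk_left x y)))]
            have hfe : S.filter (fun v => v ∈ s(x, y)) = {y} := by
              ext v
              simp only [Finset.mem_filter, Sym2.mem_iff, Finset.mem_singleton]
              constructor
              · rintro ⟨hv, rfl | rfl⟩
                · exact absurd hv hx
                · rfl
              · rintro rfl
                exact ⟨hy, Or.inr rfl⟩
            rw [hfe, Finset.card_singleton]
          · have h3 : ¬ (∃ v ∈ S, v ∈ s(x, y)) := by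
              rintro ⟨v, hv, hv'⟩
              rcases Sym2.mem_iff.mp hv' with rfl | rfl
              · exact hx hv
              · exact hy hv
            rw [if_neg h3, if_neg (fun h => hx (h x (Sym2.mem_mk_left x y)))]
            have hfe : S.filter (fun v => v ∈ s(x, y)) = ∅ := by
              ext v
              simp only [Finset.mem_filter, Sym2.mem_iff, Finset.notMem_empty, iff_false,
                not_and]
              rintro hv (rfl | rfl)
              · exact hx hv
              · exact hy hv
            rw [hfe]
            simp
    _ = simpleGraphKappa G S + (G.edgeFinset.filter fun p => ∀ v ∈ p, v ∈ S).card := by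
        rw [Finset.sum_add_distrib, ← Finset.card_filter, ← Finset.card_filter]
        rfl

lemma kappa_lower (hreg : ∀ v : V, G.degree v = 3) (S : Finset V) (hS : S.Nonempty) :
    S.card + 2 ≤ simpleGraphKappa G S := by
  have key := kappa_key G S
  rw [Finset.sum_congr rfl (fun v _ => hreg v), Finset.sum_const, smul_eq_mul] at key
  set I := G.edgeFinset.filter fun p => ∀ v ∈ p, v ∈ S with hI
  have hIE : I.card ≤ simpleGraphKappa G S := by
    apply Finset.card_le_card
    intro e he
    rw [hI, Finset.mem_filter] at he
    simp only [simpleGraphKappa, Finset.mem_filter]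
    refine ⟨he.1, e.out.1, he.2 _ ?_, ?_⟩ <;> exact Sym2.out_fst_mem e
  rcases Nat.lt_or_ge S.card 3 with hlt | hge
  · interval_cases h : S.card
    · exact absurd (Finset.card_eq_zero.mp h) hS.ne_empty
    · -- card = 1 : I is empty
      obtain ⟨a, rfl⟩ := Finset.card_eq_one.mp h
      have hIe : I = ∅ := by
        rw [Finset.eq_empty_iff_forall_notMem]
        intro e he
        induction e with
        | _ x y =>
          rw [hI, Finset.mem_filter] at he
          have hxy : G.Adj x y := by
            rw [SimpleGraph.mem_edgeFinset, SimpleGraph.mem_edgeSet] at he; exact he.1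
          have hx := he.2 x (Sym2.mem_mk_left x y)
          have hy := he.2 y (Sym2.mem_mk_right x y)
          simp only [Finset.mem_singleton] at hx hy
          exact hxy.ne (hx.trans hy.symm)
      rw [hIe] at key
      simp at key
      omega
    · -- card = 2 : I has at most one element
      obtain ⟨a, b, hab, rfl⟩ := Finset.card_eq_two.mp h
      have hsub : I ⊆ {s(a, b)} := by
        intro e he
        induction e with
        | _ x y =>
          rw [hI, Finset.mem_filter] at he
          have hxy : G.Adj x y := by
            rw [SimpleGraph.mem_edgeFinset, SimpleGraph.mem_edgeSet] at he; exact he.1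
          have hx := he.2 x (Sym2.mem_mk_left x y)
          have hy := he.2 y (Sym2.mem_mk_right x y)
          simp only [Finset.mem_insert, Finset.mem_singleton] at hx hy
          rw [Finset.mem_singleton, Sym2.eq_iff]
          rcases hx with rfl | rfl <;> rcases hy with rfl | rfl
          · exact absurd rfl hxy.ne
          · exact Or.inl ⟨rfl, rfl⟩
          · exact Or.inr ⟨rfl, rfl⟩
          · exact absurd rfl hxy.ne
      have hc := Finset.card_le_card hsub
      simp at hc
      omega
  · omega

lemma kappa_singleton (v : V) : simpleGraphKappa G {v} = G.degree v := by
  rw [← SimpleGraph.card_incidenceFinset_eq_degree, SimpleGraph.incidenceFinset_eq_filter]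
  simp only [simpleGraphKappa]
  congr 1
  apply Finset.filter_congr
  intro e _
  simp

end aux


/-- For a 3-regular simple graph `G` with `n ≥ 4` vertices, the dimension of the
degree-`k` component of the internal bizonotopal algebra `B_G^i` (the number of
vectors `a` of weight `k` with `∑_{v∈S} a v ≤ κ_S − 2` for all nonempty `S`)
equals `C(n, k)`; i.e. the Hilbert series of `B_G^i` is `(1+t)^n`. -/
theorem internal_hilbert_three_regular {V : Type*} [Fintype V] [DecidableEq V]
    (G : SimpleGraph V) [DecidableRel G.Adj]
    (hn : 4 ≤ Fintype.card V)
    (hreg : ∀ v : V, G.degree v = 3) (k : ℕ) :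
    Set.ncard {a : V → ℕ | ∑ v : V, a v = k ∧
        ∀ S : Finset V, S.Nonempty → ∑ v ∈ S, a v + 2 ≤ simpleGraphKappa G S} =
      Nat.choose (Fintype.card V) k := by
  classical
  set f : Finset V → V → ℕ := fun s v => if v ∈ s then 1 else 0 with hf
  have hinj : Function.Injective f := by
    intro s t h
    ext v
    have := congrFun h v
    by_cases hv : v ∈ s <;> by_cases hw : v ∈ t <;> simp [hf, hv, hw] at this ⊢ <;> tauto
  have hset : {a : V → ℕ | ∑ v : V, a v = k ∧
        ∀ S : Finset V, S.Nonempty → ∑ v ∈ S, a v + 2 ≤ simpleGraphKappa G S} =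
      f '' ((Finset.univ.powersetCard k : Finset (Finset V)) : Set (Finset V)) := by
    ext a
    simp only [Set.mem_setOf_eq, Set.mem_image, Finset.mem_coe, Finset.mem_powersetCard]
    constructor
    · rintro ⟨hsum, hineq⟩
      have hle : ∀ v : V, a v ≤ 1 := by
        intro v
        have h := hineq {v} (Finset.singleton_nonempty v)
        rw [kappa_singleton, hreg] at h
        simp at h
        omega
      refine ⟨Finset.univ.filter (fun v => a v = 1), ⟨Finset.subset_univ _, ?_⟩, ?_⟩
      · rw [← hsum, Finset.card_filter]
        apply Finset.sum_congr rfl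
        intro v _
        have := hle v
        split <;> omega
      · ext v
        have := hle v
        simp only [hf, Finset.mem_filter, Finset.mem_univ, true_and]
        split <;> omega
    · rintro ⟨s, ⟨-, hcard⟩, rfl⟩
      constructor
      · simp only [hf]
        rw [Finset.sum_ite_mem, Finset.univ_inter, Finset.sum_const, smul_eq_mul, mul_one]
        exact hcard
      · intro S hS
        have h1 : ∑ v ∈ S, f s v ≤ S.card := by
          calc ∑ v ∈ S, f s v ≤ ∑ v ∈ S, 1 := by
                apply Finset.sum_le_sum
                intro v _
                simp only [hf]
                split <;> omega
            _ = S.card := by simp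
        have h2 := kappa_lower G hreg S hS
        omega
  rw [hset, Set.ncard_image_of_injective _ hinj, Set.ncard_coe_finset,
    Finset.card_powersetCard, Finset.card_univ]
end
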